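/- arXiv:2602.21823 — 6 statements merged into one kernel-verified Lean document; each statement's English description precedes it below -/
import Mathlib

section
/- Suppose that X satisfies property (∗)_r (for every ε > 0 there is δ > 0 such that d(x,y) < δ implies μ(B(x,r) Δ B(y,r)) < ε), that sup{μ(B(x,r)) : x ∈ X} < ∞, and that inf{μ(B(x,r)) : x ∈ X} > 0. Then for every bounded subset F ⊂ L^∞(X), the family {A_r f : f ∈ F} is uniformly equicontinuous: for every ε > 0 there exists δ > 0 such that for all x, y with d(x,y) < δ and all f ∈ F, |A_r f(x) − A_r f(y)| < ε. -/
open MeasureTheory Metric Set ENNReal NNReal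

noncomputable def avgOp {X : Type*} [MetricSpace X] [MeasurableSpace X]
    (μ : MeasureTheory.Measure X) (t : ℝ) (f : X → ℝ) (x : X) : ℝ :=
  (μ (Metric.closedBall x t)).toReal⁻¹ * ∫ y in Metric.closedBall x t, f y ∂μ

theorem stmt9 {X : Type*} [MetricSpace X] [MeasurableSpace X] (μ : Measure X)
    (hball : ∀ (x : X) (t : ℝ), 0 < t → 0 < μ (closedBall x t) ∧ μ (closedBall x t) < ⊤)
    (r : ℝ) (hr : 0 < r)
    (hstarr : ∀ ε : ℝ≥0∞, 0 < ε → ∃ δ : ℝ, 0 < δ ∧ ∀ x y : X, dist x y < δ →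
      μ (symmDiff (closedBall x r) (closedBall y r)) < ε)
    (hsup : (⨆ x : X, μ (closedBall x r)) < ⊤)
    (hinf : 0 < ⨅ x : X, μ (closedBall x r))
    (F : Set (X → ℝ)) (c : ℝ≥0∞) (hc : c < ⊤)
    (hF : ∀ f ∈ F, MemLp f ⊤ μ ∧ eLpNorm f ⊤ μ ≤ c) :
    ∀ ε : ℝ, 0 < ε → ∃ δ : ℝ, 0 < δ ∧ ∀ x y : X, dist x y < δ →
      ∀ f ∈ F, |avgOp μ r f x - avgOp μ r f y| < ε := by
  intro ε hε
  rcases isEmpty_or_nonempty X with hX | hX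
  · exact ⟨1, one_pos, fun x => (IsEmpty.false x).elim⟩
  obtain ⟨x₀⟩ := hX
  have hm_pos : ∀ x : X, 0 < μ (closedBall x r) := fun x => (hball x r hr).1
  have hm_top : ∀ x : X, μ (closedBall x r) < ⊤ := fun x => (hball x r hr).2
  set a : ℝ≥0∞ := ⨅ x : X, μ (closedBall x r) with ha
  have ha_le : ∀ x : X, a ≤ μ (closedBall x r) := fun x => iInf_le _ x
  have ha_top : a < ⊤ := lt_of_le_of_lt (ha_le x₀) (hm_top x₀)
  set A := a.toReal with hA
  have hA_pos : 0 < A := ENNReal.toReal_pos hinf.ne' ha_top.ne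
  set C := c.toReal with hC
  have hC0 : 0 ≤ C := ENNReal.toReal_nonneg
  obtain ⟨δ, hδ, hδ'⟩ := hstarr (ENNReal.ofReal (ε * A / (3 * (C + 1))))
    (ENNReal.ofReal_pos.mpr (by positivity))
  refine ⟨δ, hδ, fun x y hxy f hf => ?_⟩
  obtain ⟨hfm, hfc⟩ := hF f hf
  set Bx := closedBall x r with hBxdef
  set By := closedBall y r with hBydef
  set Mx := (μ Bx).toReal with hMx
  set My := (μ By).toReal with hMy
  have hMx_pos : 0 < Mx := ENNReal.toReal_pos (hm_pos x).ne' (hm_top x).ne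
  have hMy_pos : 0 < My := ENNReal.toReal_pos (hm_pos y).ne' (hm_top y).ne
  have hAMx : A ≤ Mx := ENNReal.toReal_mono (hm_top x).ne (ha_le x)
  have hAMy : A ≤ My := ENNReal.toReal_mono (hm_top y).ne (ha_le y)
  -- a.e. bound on f
  have hfC : ∀ᵐ z ∂μ, ‖f z‖ ≤ C := by
    filter_upwards [ae_le_eLpNormEssSup (f := f) (μ := μ)] with z hz
    have h1 : (‖f z‖₊ : ℝ≥0∞) ≤ c := le_trans hz (by rwa [← eLpNorm_exponent_top])
    calc ‖f z‖ = ((‖f z‖₊ : ℝ≥0∞)).toReal := by simp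
    _ ≤ C := ENNReal.toReal_mono hc.ne h1
  -- symmetric difference measure
  have hΔlt : μ (symmDiff Bx By) < ENNReal.ofReal (ε * A / (3 * (C + 1))) := hδ' x y hxy
  have hΔtop : μ (symmDiff Bx By) ≠ ⊤ := (lt_of_lt_of_le hΔlt le_top).ne
  set t := (μ (symmDiff Bx By)).toReal with ht
  have ht0 : 0 ≤ t := ENNReal.toReal_nonneg
  have htlt : t < ε * A / (3 * (C + 1)) :=
    (ENNReal.lt_ofReal_iff_toReal_lt hΔtop).mp hΔlt
  -- measurable hulls
  set Bx' := toMeasurable μ Bx with hBx'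
  set By' := toMeasurable μ By with hBy'
  have hBxm : MeasurableSet Bx' := measurableSet_toMeasurable μ Bx
  have hBym : MeasurableSet By' := measurableSet_toMeasurable μ By
  have hμBx' : μ Bx' = μ Bx := measure_toMeasurable Bx
  have hμBy' : μ By' = μ By := measure_toMeasurable By
  have hresx : μ.restrict Bx' = μ.restrict Bx := Measure.restrict_toMeasurable (hm_top x).ne
  have hresy : μ.restrict By' = μ.restrict By := Measure.restrict_toMeasurable (hm_top y).ne
  -- the measures of the hull differences are small
  have hdiff1 : μ (Bx' \ By') ≤ μ (symmDiff Bx By) := by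
    have e1 : μ (Bx' ∩ By'ᶜ) = μ (Bx ∩ By'ᶜ) :=
      Measure.measure_toMeasurable_inter hBym.compl (hm_top x).ne
    have e2 : Bx ∩ By'ᶜ ⊆ Bx \ By := fun z hz =>
      ⟨hz.1, fun h => hz.2 (subset_toMeasurable μ By h)⟩
    calc μ (Bx' \ By') = μ (Bx ∩ By'ᶜ) := e1
      _ ≤ μ (Bx \ By) := measure_mono e2
      _ ≤ μ (symmDiff Bx By) := measure_mono (fun z hz => Set.mem_symmDiff.mpr (Or.inl ⟨hz.1, hz.2⟩))
  have hdiff2 : μ (By' \ Bx') ≤ μ (symmDiff Bx By) := by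
    have e1 : μ (By' ∩ Bx'ᶜ) = μ (By ∩ Bx'ᶜ) :=
      Measure.measure_toMeasurable_inter hBxm.compl (hm_top y).ne
    have e2 : By ∩ Bx'ᶜ ⊆ By \ Bx := fun z hz =>
      ⟨hz.1, fun h => hz.2 (subset_toMeasurable μ Bx h)⟩
    calc μ (By' \ Bx') = μ (By ∩ Bx'ᶜ) := e1
      _ ≤ μ (By \ Bx) := measure_mono e2
      _ ≤ μ (symmDiff Bx By) := measure_mono (fun z hz => Set.mem_symmDiff.mpr (Or.inr ⟨hz.1, hz.2⟩))
  have hdiff1' : (μ (Bx' \ By')).toReal ≤ t := ENNReal.toReal_mono hΔtop hdiff1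
  have hdiff2' : (μ (By' \ Bx')).toReal ≤ t := ENNReal.toReal_mono hΔtop hdiff2
  have hdiff1top : μ (Bx' \ By') ≠ ⊤ := (lt_of_le_of_lt hdiff1 hΔtop.lt_top).ne
  have hdiff2top : μ (By' \ Bx') ≠ ⊤ := (lt_of_le_of_lt hdiff2 hΔtop.lt_top).ne
  -- integrability and integral bounds
  have hint : ∀ s : Set X, μ s ≠ ⊤ → IntegrableOn f s μ := fun s hs =>
    Measure.integrableOn_of_bounded hs hfm.aestronglyMeasurable (ae_restrict_of_ae hfC)
  have hIbound : ∀ s : Set X, μ s ≠ ⊤ → |∫ z in s, f z ∂μ| ≤ C * (μ s).toReal := by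
    intro s hs
    rw [← Real.norm_eq_abs]
    exact norm_setIntegral_le_of_norm_le_const_ae (lt_top_iff_ne_top.mpr hs)
      (ae_restrict_of_ae hfC)
  set Ix := ∫ z in Bx, f z ∂μ with hIxdef
  set Iy := ∫ z in By, f z ∂μ with hIydef
  have hIx' : Ix = ∫ z in Bx', f z ∂μ := by rw [hIxdef]; exact (by rw [hresx])
  have hIy' : Iy = ∫ z in By', f z ∂μ := by rw [hIydef]; exact (by rw [hresy])
  have hintx' : IntegrableOn f Bx' μ := hint Bx' (by rw [hμBx']; exact (hm_top x).ne)
  have hinty' : IntegrableOn f By' μ := hint By' (by rw [hμBy']; exact (hm_top y).ne)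
  have hIx : Ix = (∫ z in Bx' ∩ By', f z ∂μ) + ∫ z in Bx' \ By', f z ∂μ := by
    rw [hIx', ← integral_inter_add_diff hBym hintx']
  have hIy : Iy = (∫ z in Bx' ∩ By', f z ∂μ) + ∫ z in By' \ Bx', f z ∂μ := by
    rw [hIy', ← integral_inter_add_diff hBxm hinty', inter_comm]
  have hIdiff : |Ix - Iy| ≤ 2 * (C * t) := by
    have heq : Ix - Iy = (∫ z in Bx' \ By', f z ∂μ) - ∫ z in By' \ Bx', f z ∂μ := by
      rw [hIx, hIy]; ring
    rw [heq]
    refine (abs_sub _ _).trans ?_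
    have b1 := (hIbound _ hdiff1top).trans (mul_le_mul_of_nonneg_left hdiff1' hC0)
    have b2 := (hIbound _ hdiff2top).trans (mul_le_mul_of_nonneg_left hdiff2' hC0)
    linarith
  -- measure difference bound
  have hsub : ∀ s u : Set X, s ⊆ u ∪ symmDiff s u := by
    intro s u z hz
    by_cases h : z ∈ u
    · exact Or.inl h
    · exact Or.inr (Set.mem_symmDiff.mpr (Or.inl ⟨hz, h⟩))
  have h1 : Mx ≤ My + t := by
    have h := (measure_mono (hsub Bx By)).trans (measure_union_le (μ := μ) By (symmDiff Bx By))
    have h' := ENNReal.toReal_mono (ENNReal.add_ne_top.mpr ⟨(hm_top y).ne, hΔtop⟩) h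
    rwa [ENNReal.toReal_add (hm_top y).ne hΔtop] at h'
  have h2 : My ≤ Mx + t := by
    have h := (measure_mono (hsub By Bx)).trans (measure_union_le (μ := μ) Bx (symmDiff By Bx))
    rw [symmDiff_comm] at h
    have h' := ENNReal.toReal_mono (ENNReal.add_ne_top.mpr ⟨(hm_top x).ne, hΔtop⟩) h
    rwa [ENNReal.toReal_add (hm_top x).ne hΔtop] at h'
  have hMdiff : |My - Mx| ≤ t := by rw [abs_sub_le_iff]; constructor <;> linarith
  -- the final estimate
  have hIyb : |Iy| ≤ C * My := by
    have := hIbound By (hm_top y).ne; rwa [← hMy, ← hIydef] at this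
  have hgoal : avgOp μ r f x - avgOp μ r f y = Mx⁻¹ * (Ix - Iy) + (Mx⁻¹ - My⁻¹) * Iy := by
    show Mx⁻¹ * Ix - My⁻¹ * Iy = _
    ring
  rw [hgoal]
  have hterm1 : |Mx⁻¹ * (Ix - Iy)| ≤ A⁻¹ * (2 * (C * t)) := by
    rw [abs_mul, abs_of_pos (inv_pos.mpr hMx_pos)]
    exact mul_le_mul (inv_anti₀ hA_pos hAMx) hIdiff (abs_nonneg _) (inv_nonneg.mpr hA_pos.le)
  have hterm2 : |(Mx⁻¹ - My⁻¹) * Iy| ≤ A⁻¹ * (C * t) := by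
    rw [abs_mul]
    have heq : Mx⁻¹ - My⁻¹ = (My - Mx) / (Mx * My) := by field_simp
    have h3 : |Mx⁻¹ - My⁻¹| ≤ t / (Mx * My) := by
      rw [heq, abs_div, abs_of_pos (mul_pos hMx_pos hMy_pos)]
      gcongr
    calc |Mx⁻¹ - My⁻¹| * |Iy| ≤ (t / (Mx * My)) * (C * My) :=
          mul_le_mul h3 hIyb (abs_nonneg _) (by positivity)
      _ = Mx⁻¹ * (C * t) := by field_simp
      _ ≤ A⁻¹ * (C * t) := by
          apply mul_le_mul_of_nonneg_right (inv_anti₀ hA_pos hAMx) (by positivity)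
  have hbound := (abs_add_le _ _).trans (add_le_add hterm1 hterm2)
  have hfinal : A⁻¹ * (2 * (C * t)) + A⁻¹ * (C * t) < ε := by
    have htlt' : t * (3 * (C + 1)) < ε * A := (lt_div_iff₀ (by positivity)).mp htlt
    rw [show A⁻¹ * (2 * (C * t)) + A⁻¹ * (C * t) = (3 * C * t) / A by field_simp; ring,
      div_lt_iff₀ hA_pos]
    nlinarith
  exact lt_of_le_of_lt hbound hfinal
end

section
/- Fix s > 0 and suppose X is s-doubling, i.e. there is γ ≥ 1 with μ(B(x,2s)) ≤ γ μ(B(x,s)) for all x ∈ X. If the averaging operator A_s : L^1(X) → L^1(X) is a compact operator, then X is bounded. -/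
open MeasureTheory Metric Set ENNReal NNReal

section aux

variable {X : Type*} [MetricSpace X] [MeasurableSpace X] [BorelSpace X]

/-- Key estimate: the averaged normalized indicator of the `2s`-ball is constant, equal to
`(μ (closedBall z (2s)))⁻¹`, on the `s`-ball, which gives a lower bound `γ⁻¹` for its `L¹` norm. -/
lemma core_lower (μ : Measure X)
    (hball : ∀ (x : X) (t : ℝ), 0 < t → 0 < μ (closedBall x t) ∧ μ (closedBall x t) < ⊤)
    (s : ℝ) (hs : 0 < s) (γ : ℝ) (hγ : 1 ≤ γ)
    (hdoub : ∀ x : X, μ (closedBall x (2 * s)) ≤ ENNReal.ofReal γ * μ (closedBall x s))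
    (z : X) :
    (ENNReal.ofReal γ)⁻¹ ≤ ∫⁻ x in closedBall z s,
      ENNReal.ofReal (avgOp μ s ((closedBall z (2 * s)).indicator
        (fun _ => (μ (closedBall z (2 * s))).toReal⁻¹)) x) ∂μ := by
  have h2s : 0 < 2 * s := by positivity
  have hB0 := (hball z s hs).1
  have hBtop := (hball z s hs).2
  have hC0 := (hball z (2 * s) h2s).1
  have hCtop := (hball z (2 * s) h2s).2
  have hγ0 : ENNReal.ofReal γ ≠ 0 := (ENNReal.ofReal_pos.2 (by linarith)).ne'
  have hpt : ∀ x ∈ closedBall z s,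
      ENNReal.ofReal (avgOp μ s ((closedBall z (2 * s)).indicator
        (fun _ => (μ (closedBall z (2 * s))).toReal⁻¹)) x)
      = (μ (closedBall z (2 * s)))⁻¹ := by
    intro x hx
    have hx0 := (hball x s hs).1
    have hxtop := (hball x s hs).2
    have hsub : closedBall x s ⊆ closedBall z (2 * s) := by
      intro t ht
      have h1 : dist t x ≤ s := mem_closedBall.mp ht
      have h2 : dist x z ≤ s := mem_closedBall.mp hx
      exact mem_closedBall.mpr (by
        calc dist t z ≤ dist t x + dist x z := dist_triangle _ _ _
          _ ≤ 2 * s := by linarith)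
    have : avgOp μ s ((closedBall z (2 * s)).indicator
        (fun _ => (μ (closedBall z (2 * s))).toReal⁻¹)) x
        = (μ (closedBall z (2 * s))).toReal⁻¹ := by
      unfold avgOp
      rw [setIntegral_indicator measurableSet_closedBall, Set.inter_eq_left.2 hsub,
        setIntegral_const, smul_eq_mul, measureReal_def, ← mul_assoc,
        inv_mul_cancel₀ (ENNReal.toReal_pos hx0.ne' hxtop.ne).ne', one_mul]
    rw [this, ENNReal.ofReal_inv_of_pos (ENNReal.toReal_pos hC0.ne' hCtop.ne),
      ENNReal.ofReal_toReal hCtop.ne]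
  rw [setLIntegral_congr_fun measurableSet_closedBall hpt, setLIntegral_const]
  calc (ENNReal.ofReal γ)⁻¹
      = (ENNReal.ofReal γ * μ (closedBall z s))⁻¹ * μ (closedBall z s) := by
        rw [ENNReal.mul_inv (Or.inl hγ0) (Or.inl ENNReal.ofReal_ne_top), mul_assoc,
          ENNReal.inv_mul_cancel hB0.ne' hBtop.ne, mul_one]
    _ ≤ (μ (closedBall z (2 * s)))⁻¹ * μ (closedBall z s) :=
        mul_le_mul_left (ENNReal.inv_le_inv.2 (hdoub z)) _

end aux

theorem stmt10 {X : Type*} [MetricSpace X] [MeasurableSpace X] (μ : Measure X)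
    [BorelSpace X]
    (hball : ∀ (x : X) (t : ℝ), 0 < t → 0 < μ (closedBall x t) ∧ μ (closedBall x t) < ⊤)
    (s : ℝ) (hs : 0 < s)
    (hdoub : ∃ γ : ℝ, 1 ≤ γ ∧
      ∀ x : X, μ (closedBall x (2 * s)) ≤ ENNReal.ofReal γ * μ (closedBall x s))
    (hmap : ∀ f : X → ℝ, MemLp f 1 μ → MemLp (avgOp μ s f) 1 μ)
    (hcomp : ∀ f : ℕ → X → ℝ, (∀ n, MemLp (f n) 1 μ) → (∀ n, eLpNorm (f n) 1 μ ≤ 1) →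
      ∃ φ : ℕ → ℕ, StrictMono φ ∧ ∀ ε : ℝ≥0∞, 0 < ε → ∃ N : ℕ, ∀ m ≥ N, ∀ n ≥ N,
        eLpNorm (fun x => avgOp μ s (f (φ m)) x - avgOp μ s (f (φ n)) x) 1 μ < ε) :
    Bornology.IsBounded (Set.univ : Set X) := by
  obtain ⟨γ, hγ, hdoub⟩ := hdoub
  by_contra hU
  -- X is nonempty
  have hne : Nonempty X := by
    by_contra h
    rw [not_nonempty_iff] at h
    exact hU (by simp [Set.univ_eq_empty_iff.2 h])
  obtain ⟨x0⟩ := hne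
  -- construct a sequence of points with pairwise distance > 5 s
  have key : ∀ y : X, ∃ w : X, dist x0 y + 5 * s < dist x0 w := by
    intro y
    by_contra h
    push_neg at h
    exact hU ((isBounded_closedBall (x := x0) (r := dist x0 y + 5 * s)).subset
      (fun w _ => by simpa [mem_closedBall, dist_comm] using h w))
  let u : ℕ → X := fun n => Nat.rec x0 (fun _ p => Classical.choose (key p)) n
  have hstep : ∀ n, dist x0 (u n) + 5 * s < dist x0 (u (n + 1)) :=
    fun n => Classical.choose_spec (key (u n))
  have hchain : ∀ m n, m < n → dist x0 (u m) + 5 * s < dist x0 (u n) := by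
    intro m n hmn
    induction n with
    | zero => omega
    | succ k ih =>
      rcases Nat.lt_succ_iff_lt_or_eq.1 hmn with h | h
      · have := ih h
        have := hstep k
        have h5 : (0:ℝ) < 5 * s := by positivity
        linarith
      · subst h; exact hstep m
  have hsep : ∀ m n, m ≠ n → 5 * s < dist (u m) (u n) := by
    have base : ∀ m n, m < n → 5 * s < dist (u m) (u n) := by
      intro m n hmn
      have h := hchain m n hmn
      have h2 : dist x0 (u n) - dist x0 (u m) ≤ dist (u m) (u n) := by
        have := dist_triangle x0 (u m) (u n)
        linarith [this]
      linarith
    intro m n hmn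
    rcases lt_or_gt_of_ne hmn with h | h
    · exact base m n h
    · rw [dist_comm]; exact base n m h
  -- the normalized indicator functions of the 2s-balls
  set f : ℕ → X → ℝ := fun n =>
    (closedBall (u n) (2 * s)).indicator
      (fun _ => (μ (closedBall (u n) (2 * s))).toReal⁻¹) with hf
  have h2s : 0 < 2 * s := by positivity
  have hmem : ∀ n, MemLp (f n) 1 μ :=
    fun n => memLp_indicator_const 1 measurableSet_closedBall _
      (Or.inr (hball (u n) (2 * s) h2s).2.ne)
  have hnorm : ∀ n, eLpNorm (f n) 1 μ ≤ 1 := by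
    intro n
    have h0 := (hball (u n) (2 * s) h2s).1
    have htop := (hball (u n) (2 * s) h2s).2
    rw [hf, eLpNorm_indicator_const measurableSet_closedBall one_ne_zero one_ne_top]
    simp only [ENNReal.toReal_one, one_div_one, ENNReal.rpow_one]
    rw [Real.enorm_eq_ofReal (by positivity),
      ENNReal.ofReal_inv_of_pos (ENNReal.toReal_pos h0.ne' htop.ne),
      ENNReal.ofReal_toReal htop.ne, ENNReal.inv_mul_cancel h0.ne' htop.ne]
  obtain ⟨φ, hφ, hcauchy⟩ := hcomp f hmem hnorm
  have hγpos : (0:ℝ≥0∞) < (ENNReal.ofReal γ)⁻¹ :=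
    ENNReal.inv_pos.2 ofReal_ne_top
  obtain ⟨N, hN⟩ := hcauchy _ hγpos
  have hlt := hN N le_rfl (N + 1) (by omega)
  set a := φ N
  set b := φ (N + 1)
  have hab : a ≠ b := (hφ (Nat.lt_succ_self N)).ne
  -- on closedBall (u a) s, avgOp of f b vanishes
  have hvanish : ∀ x ∈ closedBall (u a) s, avgOp μ s (f b) x = 0 := by
    intro x hx
    have hzero : ∀ y ∈ closedBall x s, f b y = 0 := by
      intro y hy
      apply Set.indicator_of_notMem
      intro hyb
      have hx' : dist (u a) x ≤ s := by rw [dist_comm]; exact mem_closedBall.mp hx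
      have hy' : dist x y ≤ s := by rw [dist_comm]; exact mem_closedBall.mp hy
      have hyb' : dist y (u b) ≤ 2 * s := mem_closedBall.mp hyb
      linarith [dist_triangle4 (u a) x y (u b), hsep a b hab]
    unfold avgOp
    rw [setIntegral_congr_fun measurableSet_closedBall hzero]
    simp
  -- avgOp of f a is nonneg
  have hnonneg : ∀ n x, 0 ≤ avgOp μ s (f n) x := by
    intro n x
    unfold avgOp
    apply mul_nonneg (by positivity)
    apply integral_nonneg
    intro y
    exact Set.indicator_nonneg (fun _ _ => by positivity) y
  -- lower bound for the eLpNorm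
  have hlow : (ENNReal.ofReal γ)⁻¹ ≤
      eLpNorm (fun x => avgOp μ s (f a) x - avgOp μ s (f b) x) 1 μ := by
    rw [eLpNorm_one_eq_lintegral_enorm]
    calc (ENNReal.ofReal γ)⁻¹
        ≤ ∫⁻ x in closedBall (u a) s, ENNReal.ofReal (avgOp μ s (f a) x) ∂μ :=
          core_lower μ hball s hs γ hγ hdoub (u a)
      _ = ∫⁻ x in closedBall (u a) s,
            ‖avgOp μ s (f a) x - avgOp μ s (f b) x‖ₑ ∂μ := by
          apply setLIntegral_congr_fun measurableSet_closedBall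
          intro x hx
          dsimp only
          rw [hvanish x hx, sub_zero, ← Real.enorm_eq_ofReal (hnonneg a x)]
      _ ≤ ∫⁻ x, ‖avgOp μ s (f a) x - avgOp μ s (f b) x‖ₑ ∂μ :=
          setLIntegral_le_lintegral _ _
  exact absurd hlt (not_lt.2 hlow)
end

section
/- Fix s > 0. If the averaging operator A_s : L^∞(X) → L^∞(X) is a compact operator, then X is bounded. -/
open MeasureTheory Metric Set ENNReal NNReal

theorem stmt11 {X : Type*} [MetricSpace X] [MeasurableSpace X] (μ : Measure X)
    [BorelSpace X]
    (hball : ∀ (x : X) (t : ℝ), 0 < t → 0 < μ (closedBall x t) ∧ μ (closedBall x t) < ⊤)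
    (s : ℝ) (hs : 0 < s)
    (hmap : ∀ f : X → ℝ, MemLp f ⊤ μ → MemLp (avgOp μ s f) ⊤ μ)
    (hcomp : ∀ f : ℕ → X → ℝ, (∀ n, MemLp (f n) ⊤ μ) → (∀ n, eLpNorm (f n) ⊤ μ ≤ 1) →
      ∃ φ : ℕ → ℕ, StrictMono φ ∧ ∀ ε : ℝ≥0∞, 0 < ε → ∃ N : ℕ, ∀ m ≥ N, ∀ n ≥ N,
        eLpNorm (fun x => avgOp μ s (f (φ m)) x - avgOp μ s (f (φ n)) x) ⊤ μ < ε) :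
    Bornology.IsBounded (Set.univ : Set X) := by
  rcases isEmpty_or_nonempty X with hE | hN
  · simp [Set.univ_eq_empty_iff.mpr hE]
  by_contra hub
  obtain ⟨x0⟩ := hN
  -- unboundedness: points arbitrarily far from x0
  have hfar : ∀ c : ℝ, ∃ y : X, c < dist x0 y := by
    intro c
    by_contra h
    push_neg at h
    exact hub ((Metric.isBounded_iff_subset_closedBall x0).mpr
      ⟨c, fun y _ => by simpa [Metric.mem_closedBall, dist_comm] using h y⟩)
  -- a separated sequence
  set p : ℕ → X := fun n => Nat.rec x0
    (fun _ q => Classical.choose (hfar (dist x0 q + 6 * s + 1))) n with hp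
  have hstep : ∀ n, dist x0 (p n) + 6 * s + 1 < dist x0 (p (n + 1)) := fun n =>
    Classical.choose_spec (hfar (dist x0 (p n) + 6 * s + 1))
  have hmono : ∀ n m, n < m → dist x0 (p n) + 6 * s < dist x0 (p m) := by
    intro n m hnm
    induction m with
    | zero => omega
    | succ m ih =>
      rcases Nat.lt_succ_iff_lt_or_eq.mp hnm with h | h
      · have := hstep m
        have := ih h
        linarith [dist_nonneg (x := x0) (y := p m)]
      · subst h; linarith [hstep n]
  have hsep : ∀ n m, n < m → 6 * s < dist (p n) (p m) := by
    intro n m hnm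
    have h1 := hmono n m hnm
    have h2 := dist_triangle x0 (p n) (p m)
    linarith
  -- the test functions
  set f : ℕ → X → ℝ := fun n => (closedBall (p n) (2 * s)).indicator (fun _ => 1) with hf
  have hmeas : ∀ n, MeasurableSet (closedBall (p n) (2 * s)) := fun n =>
    measurableSet_closedBall
  have hbd : ∀ n z, ‖f n z‖ ≤ 1 := by
    intro n z
    simp only [hf, Set.indicator]
    split <;> simp
  have hmem : ∀ n, MemLp (f n) ⊤ μ := fun n =>
    memLp_top_of_bound ((measurable_const.indicator (hmeas n)).aestronglyMeasurable) 1
      (Filter.Eventually.of_forall (hbd n))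
  have hnorm : ∀ n, eLpNorm (f n) ⊤ μ ≤ 1 := by
    intro n
    rw [eLpNorm_exponent_top]
    simpa using eLpNormEssSup_le_of_ae_bound (C := 1)
      (Filter.Eventually.of_forall (hbd n))
  -- key evaluation lemmas
  have hone : ∀ n z, z ∈ closedBall (p n) s → avgOp μ s (f n) z = 1 := by
    intro n z hz
    have hsub : closedBall z s ⊆ closedBall (p n) (2 * s) := by
      intro y hy
      rw [mem_closedBall] at *
      calc dist y (p n) ≤ dist y z + dist z (p n) := dist_triangle _ _ _
        _ ≤ 2 * s := by linarith
    have hint : ∫ y in closedBall z s, f n y ∂μ = (μ (closedBall z s)).toReal := by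
      have : ∫ y in closedBall z s, f n y ∂μ = ∫ _ in closedBall z s, (1 : ℝ) ∂μ :=
        setIntegral_congr_fun measurableSet_closedBall
          (fun y hy => by simp [hf, Set.indicator_of_mem (hsub hy)])
      rw [this, setIntegral_const, smul_eq_mul, mul_one, measureReal_def]
    have hpos := hball z s hs
    have hne : (μ (closedBall z s)).toReal ≠ 0 :=
      (ENNReal.toReal_pos hpos.1.ne' hpos.2.ne).ne'
    rw [avgOp, hint, inv_mul_cancel₀ hne]
  have hzero : ∀ n m z, n ≠ m → z ∈ closedBall (p n) s → avgOp μ s (f m) z = 0 := by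
    intro n m z hnm hz
    have hdist : 6 * s < dist (p n) (p m) := by
      rcases hnm.lt_or_gt with h | h
      · exact hsep n m h
      · rw [dist_comm]; exact hsep m n h
    have hdisj : ∀ y ∈ closedBall z s, y ∉ closedBall (p m) (2 * s) := by
      intro y hy hym
      rw [mem_closedBall] at *
      have h1 := dist_triangle (p n) z (p m)
      have h2 := dist_triangle z y (p m)
      have h3 := dist_comm z (p n)
      have h4 := dist_comm y z
      linarith
    have hint : ∫ y in closedBall z s, f m y ∂μ = 0 := by
      have : ∫ y in closedBall z s, f m y ∂μ = ∫ _ in closedBall z s, (0 : ℝ) ∂μ :=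
        setIntegral_congr_fun measurableSet_closedBall
          (fun y hy => by simp [hf, Set.indicator_of_notMem (hdisj y hy)])
      rw [this, integral_zero]
    rw [avgOp, hint, mul_zero]
  -- apply compactness
  obtain ⟨φ, hφ, hcauchy⟩ := hcomp f hmem hnorm
  obtain ⟨N, hN⟩ := hcauchy 1 one_pos
  have hlt := hN N le_rfl (N + 1) (Nat.le_succ N)
  set a := φ N
  set b := φ (N + 1)
  have hab : a ≠ b := (hφ (Nat.lt_succ_self N)).ne
  -- on the ball around p a, the difference is 1
  set g : X → ℝ := fun z => avgOp μ s (f a) z - avgOp μ s (f b) z with hg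
  have hgval : ∀ z ∈ closedBall (p a) s, g z = 1 := by
    intro z hz
    rw [hg]
    simp only
    rw [hone a z hz, hzero a b z hab hz, sub_zero]
  rw [eLpNorm_exponent_top] at hlt
  have hae : ∀ᵐ z ∂μ, (‖g z‖₊ : ℝ≥0∞) < 1 := ae_lt_of_essSup_lt hlt
  rw [ae_iff] at hae
  have hsub : closedBall (p a) s ⊆ {z | ¬(‖g z‖₊ : ℝ≥0∞) < 1} := by
    intro z hz
    simp only [Set.mem_setOf_eq, not_lt]
    rw [hgval z hz]
    simp
  have := (hball (p a) s hs).1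
  have : μ (closedBall (p a) s) = 0 := le_antisymm (hae ▸ measure_mono hsub) zero_le
  exact absurd this (hball (p a) s hs).1.ne'
end

section
/- Let X be a bounded metric measure space that is s-doubling for every s > 0 and satisfies property (∗)_r for a fixed r > 0. Then the averaging operator A_r : L^∞(X) → L^∞(X) is compact, i.e. it maps bounded subsets of L^∞(X) to totally bounded subsets. -/
open MeasureTheory Metric Set ENNReal NNReal

set_option linter.unusedSectionVars false


section helpers
variable {X : Type*} [MetricSpace X] [MeasurableSpace X] {μ : Measure X} [BorelSpace X]


lemma doub_iter
    (hdoub : ∀ s : ℝ, 0 < s → ∃ γ : ℝ, 1 ≤ γ ∧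
      ∀ x : X, μ (closedBall x (2 * s)) ≤ ENNReal.ofReal γ * μ (closedBall x s))
    {s : ℝ} (hs : 0 < s) (k : ℕ) :
    ∃ c : ℝ≥0∞, c ≠ 0 ∧ c ≠ ∞ ∧
      ∀ x, μ (closedBall x (2 ^ k * s)) ≤ c * μ (closedBall x s) := by
  induction k with
  | zero => exact ⟨1, one_ne_zero, ENNReal.one_ne_top, fun x => by simp⟩
  | succ k ih =>
    obtain ⟨c, hc0, hctop, hc⟩ := ih
    obtain ⟨γ, hγ1, hγ⟩ := hdoub (2 ^ k * s) (by positivity)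
    have hγ0 : ENNReal.ofReal γ ≠ 0 := by
      simp only [ne_eq, ENNReal.ofReal_eq_zero, not_le]; linarith
    refine ⟨ENNReal.ofReal γ * c, by simp [hγ0, hc0], by
      simp [ENNReal.mul_ne_top, ENNReal.ofReal_ne_top, hctop], fun x => ?_⟩
    have h2 : (2 : ℝ) ^ (k + 1) * s = 2 * (2 ^ k * s) := by ring
    rw [h2]
    calc μ (closedBall x (2 * (2 ^ k * s)))
        ≤ ENNReal.ofReal γ * μ (closedBall x (2 ^ k * s)) := hγ x
      _ ≤ ENNReal.ofReal γ * (c * μ (closedBall x s)) := by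
          exact mul_le_mul_right (hc x) _
      _ = ENNReal.ofReal γ * c * μ (closedBall x s) := by rw [mul_assoc]

lemma ball_lower [Nonempty X]
    (hball : ∀ (x : X) (t : ℝ), 0 < t → 0 < μ (closedBall x t) ∧ μ (closedBall x t) < ⊤)
    (hX : Bornology.IsBounded (Set.univ : Set X))
    (hdoub : ∀ s : ℝ, 0 < s → ∃ γ : ℝ, 1 ≤ γ ∧
      ∀ x : X, μ (closedBall x (2 * s)) ≤ ENNReal.ofReal γ * μ (closedBall x s))
    {s : ℝ} (hs : 0 < s) :
    ∃ m : ℝ≥0∞, m ≠ 0 ∧ m ≠ ∞ ∧ ∀ x, m ≤ μ (closedBall x s) := by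
  obtain ⟨x₀⟩ := ‹Nonempty X›
  obtain ⟨R, hR⟩ := hX.subset_closedBall x₀
  obtain ⟨k, hk⟩ := pow_unbounded_of_one_lt ((2 * |R| + 1) / s) (one_lt_two (α := ℝ))
  have hcov : ∀ x : X, (univ : Set X) ⊆ closedBall x (2 ^ k * s) := by
    intro x z _
    have hz : dist z x₀ ≤ R := hR (mem_univ z)
    have hx : dist x x₀ ≤ R := hR (mem_univ x)
    have h1 : dist z x ≤ 2 * |R| + 1 := by
      have := dist_triangle_right z x x₀
      have hRle : R ≤ |R| := le_abs_self R
      linarith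
    have h2 : 2 * |R| + 1 ≤ 2 ^ k * s := by
      rw [div_lt_iff₀ hs] at hk
      linarith
    exact mem_closedBall.2 (h1.trans h2)
  obtain ⟨c, hc0, hctop, hc⟩ := doub_iter hdoub hs k
  have huniv_le : ∀ x, μ univ ≤ c * μ (closedBall x s) := fun x =>
    (measure_mono (hcov x)).trans (hc x)
  have huniv0 : μ univ ≠ 0 := by
    intro h
    exact absurd (measure_mono (subset_univ (closedBall x₀ s))) (by
      rw [h]; exact not_le.2 (hball x₀ s hs).1)
  have hunivtop : μ univ ≠ ∞ := by
    refine ne_top_of_le_ne_top ?_ (huniv_le x₀)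
    exact ENNReal.mul_ne_top hctop (hball x₀ s hs).2.ne
  refine ⟨μ univ / c, ?_, ?_, fun x => ?_⟩
  · simp [ENNReal.div_eq_zero_iff, huniv0, hctop]
  · exact (ENNReal.div_lt_top hunivtop hc0).ne
  · exact ENNReal.div_le_of_le_mul (by rw [mul_comm]; exact huniv_le x)

def sepSeq {X : Type*} [DecidableEq X] (pick : Finset X → X) : ℕ → Finset X
  | 0 => ∅
  | n + 1 => insert (pick (sepSeq pick n)) (sepSeq pick n)

lemma finite_cover (hμ : μ Set.univ ≠ ∞) {δ : ℝ} (hδ : 0 < δ) {m : ℝ≥0∞} (hm : m ≠ 0)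
    (hlow : ∀ x : X, m ≤ μ (closedBall x (δ / 3))) :
    ∃ t : Finset X, ∀ x : X, ∃ y ∈ t, dist x y < δ := by
  classical
  by_contra hcon
  push_neg at hcon
  choose pick hpick using hcon
  set Fn : ℕ → Finset X := sepSeq pick with hFndef
  have hFn_succ : ∀ n, Fn (n + 1) = insert (pick (Fn n)) (Fn n) := fun n => rfl
  have key : ∀ n, (Fn n).card = n ∧
      ∀ y ∈ Fn n, ∀ z ∈ Fn n, y ≠ z → δ ≤ dist y z := by
    intro n
    induction n with
    | zero => simp [hFndef, sepSeq]
    | succ n ih =>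
      have hx : ∀ y ∈ Fn n, δ ≤ dist (pick (Fn n)) y := hpick (Fn n)
      have hnotmem : pick (Fn n) ∉ Fn n := by
        intro hmem
        have := hx _ hmem
        simp only [dist_self] at this
        linarith
      rw [hFn_succ]
      constructor
      · rw [Finset.card_insert_of_notMem hnotmem, ih.1]
      · intro y hy z hz hyz
        rcases Finset.mem_insert.1 hy with hy' | hy' <;>
          rcases Finset.mem_insert.1 hz with hz' | hz'
        · exact absurd (hy'.trans hz'.symm) hyz
        · exact hy' ▸ hx _ hz'
        · rw [dist_comm]; exact hz' ▸ hx _ hy'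
        · exact ih.2 y hy' z hz' hyz
  have hbound : ∀ n : ℕ, (n : ℝ≥0∞) * m ≤ μ Set.univ := by
    intro n
    have hdisj : Set.PairwiseDisjoint ((Fn n : Finset X) : Set X)
        (fun y => closedBall y (δ / 3)) := by
      intro y hy z hz hyz
      have hd : δ ≤ dist y z := (key n).2 y (Finset.mem_coe.1 hy) z (Finset.mem_coe.1 hz) hyz
      rw [Function.onFun, Set.disjoint_left]
      intro w hw hw'
      have h1 : dist w y ≤ δ / 3 := mem_closedBall.1 hw
      have h2 : dist w z ≤ δ / 3 := mem_closedBall.1 hw'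
      have := dist_triangle_left y z w
      linarith
    have := measure_biUnion_finset (μ := μ) hdisj (fun y _ => measurableSet_closedBall)
    calc (n : ℝ≥0∞) * m = ∑ _y ∈ Fn n, m := by
          rw [Finset.sum_const, (key n).1, nsmul_eq_mul]
      _ ≤ ∑ y ∈ Fn n, μ (closedBall y (δ / 3)) :=
          Finset.sum_le_sum fun y _ => hlow y
      _ = μ (⋃ y ∈ Fn n, closedBall y (δ / 3)) := this.symm
      _ ≤ μ Set.univ := measure_mono (subset_univ _)
  obtain ⟨n, hn⟩ := ENNReal.exists_nat_gt (ENNReal.div_lt_top hμ hm).ne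
  have := hbound n
  rw [← ENNReal.le_div_iff_mul_le (Or.inl hm) (Or.inr hμ)] at this
  exact absurd hn (not_lt.2 this)


lemma avg_bound
    (hball : ∀ (x : X) (t : ℝ), 0 < t → 0 < μ (closedBall x t) ∧ μ (closedBall x t) < ⊤)
    {r : ℝ} (hr : 0 < r) {f : X → ℝ} {C : ℝ}
    (hf : ∀ᵐ x ∂μ, ‖f x‖ ≤ C) (x : X) :
    |avgOp μ r f x| ≤ C := by
  obtain ⟨h1, h2⟩ := hball x r hr
  have h3 : 0 < (μ (closedBall x r)).toReal := ENNReal.toReal_pos h1.ne' h2.ne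
  have hI : ‖∫ y in closedBall x r, f y ∂μ‖ ≤ C * (μ (closedBall x r)).toReal :=
    norm_setIntegral_le_of_norm_le_const_ae h2 (ae_restrict_of_ae hf)
  rw [Real.norm_eq_abs] at hI
  simp only [avgOp]
  rw [abs_mul, abs_inv, abs_of_nonneg ENNReal.toReal_nonneg]
  calc (μ (closedBall x r)).toReal⁻¹ * |∫ y in closedBall x r, f y ∂μ|
      ≤ (μ (closedBall x r)).toReal⁻¹ * (C * (μ (closedBall x r)).toReal) :=
        mul_le_mul_of_nonneg_left hI (by positivity)
    _ = C := by field_simp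

lemma real_alg {a b I J C D m : ℝ} (hm : 0 < m) (ha : m ≤ a) (hb : m ≤ b)
    (hIJ : |I - J| ≤ C * D) (hab : |a - b| ≤ D) (hJ : |J| ≤ C * b)
    (hC : 0 ≤ C) (hD : 0 ≤ D) :
    |a⁻¹ * I - b⁻¹ * J| ≤ 2 * C * D / m := by
  have ha0 : 0 < a := hm.trans_le ha
  have hb0 : 0 < b := hm.trans_le hb
  have key : a⁻¹ * I - b⁻¹ * J = a⁻¹ * (I - J) + ((b - a) / (a * b)) * J := by
    field_simp
    ring
  have t1 : |a⁻¹ * (I - J)| ≤ C * D / m := by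
    rw [abs_mul, abs_inv, abs_of_pos ha0, div_eq_inv_mul]
    gcongr
  have t2 : |((b - a) / (a * b)) * J| ≤ C * D / m := by
    rw [abs_mul, abs_div, abs_mul, abs_of_pos ha0, abs_of_pos hb0, abs_sub_comm]
    have step : |a - b| / (a * b) * |J| ≤ D / (a * b) * (C * b) := by
      have h1 : |a - b| / (a * b) ≤ D / (a * b) := by gcongr
      exact mul_le_mul h1 hJ (abs_nonneg _) (by positivity)
    have eq1 : D / (a * b) * (C * b) = C * D / a := by field_simp
    rw [eq1] at step
    refine step.trans ?_
    gcongr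
  calc |a⁻¹ * I - b⁻¹ * J| = |a⁻¹ * (I - J) + ((b - a) / (a * b)) * J| := by rw [key]
    _ ≤ |a⁻¹ * (I - J)| + |((b - a) / (a * b)) * J| := abs_add_le _ _
    _ ≤ C * D / m + C * D / m := add_le_add t1 t2
    _ = 2 * C * D / m := by ring

lemma avg_diff_bound
    (hball : ∀ (x : X) (t : ℝ), 0 < t → 0 < μ (closedBall x t) ∧ μ (closedBall x t) < ⊤)
    {r : ℝ} (hr : 0 < r) {f : X → ℝ} {C : ℝ} (hC : 0 ≤ C)
    (haem : AEStronglyMeasurable f μ) (hf : ∀ᵐ x ∂μ, ‖f x‖ ≤ C)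
    {m : ℝ} (hm : 0 < m) (hlow : ∀ x : X, m ≤ (μ (closedBall x r)).toReal)
    (x y : X) :
    |avgOp μ r f x - avgOp μ r f y| ≤
      2 * C * (μ (symmDiff (closedBall x r) (closedBall y r))).toReal / m := by
  set Bx := closedBall x r with hBxdef
  set By := closedBall y r with hBydef
  obtain ⟨hBx0, hBxt⟩ := hball x r hr
  obtain ⟨hBy0, hByt⟩ := hball y r hr
  have hint : ∀ s : Set X, μ s ≠ ∞ → IntegrableOn f s μ := fun s hs =>
    Measure.integrableOn_of_bounded hs haem (ae_restrict_of_ae hf)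
  have hmxy : MeasurableSet (Bx \ By) :=
    measurableSet_closedBall.diff measurableSet_closedBall
  have hmyx : MeasurableSet (By \ Bx) :=
    measurableSet_closedBall.diff measurableSet_closedBall
  have hfin_xy : μ (Bx \ By) ≠ ∞ :=
    ((measure_mono diff_subset).trans_lt hBxt).ne
  have hfin_yx : μ (By \ Bx) ≠ ∞ :=
    ((measure_mono diff_subset).trans_lt hByt).ne
  have hfin_ixy : μ (Bx ∩ By) ≠ ∞ :=
    ((measure_mono inter_subset_left).trans_lt hBxt).ne
  have hdisj1 : Disjoint (Bx ∩ By) (Bx \ By) := by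
    rw [Set.disjoint_left]; rintro z ⟨_, hz⟩ ⟨_, hz'⟩; exact hz' hz
  have hdisj2 : Disjoint (By ∩ Bx) (By \ Bx) := by
    rw [Set.disjoint_left]; rintro z ⟨_, hz⟩ ⟨_, hz'⟩; exact hz' hz
  have hIx := setIntegral_union hdisj1 hmxy (hint _ hfin_ixy) (hint _ hfin_xy) (f := f) (μ := μ)
  rw [Set.inter_union_diff] at hIx
  have hIy := setIntegral_union hdisj2 hmyx
    (hint _ (((measure_mono inter_subset_left).trans_lt hByt).ne)) (hint _ hfin_yx)
    (f := f) (μ := μ)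
  rw [Set.inter_union_diff, Set.inter_comm By Bx] at hIy
  -- bound on the two small integrals
  have hsmall : ∀ (s : Set X), μ s < ∞ →
      |∫ z in s, f z ∂μ| ≤ C * (μ s).toReal := fun s hs => by
    have := norm_setIntegral_le_of_norm_le_const_ae hs (ae_restrict_of_ae hf) (f := f)
    rwa [Real.norm_eq_abs] at this
  -- symmDiff measure
  have hsymm_eq : (μ (symmDiff Bx By)).toReal
      = (μ (Bx \ By)).toReal + (μ (By \ Bx)).toReal := by
    rw [Set.symmDiff_def, measure_union disjoint_sdiff_sdiff hmyx,
      ENNReal.toReal_add hfin_xy hfin_yx]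
  have hDnonneg : (0:ℝ) ≤ (μ (symmDiff Bx By)).toReal := ENNReal.toReal_nonneg
  -- |I - J| ≤ C * D
  have hIJ : |(∫ z in Bx, f z ∂μ) - ∫ z in By, f z ∂μ|
      ≤ C * (μ (symmDiff Bx By)).toReal := by
    have heq : (∫ z in Bx, f z ∂μ) - ∫ z in By, f z ∂μ
        = (∫ z in Bx \ By, f z ∂μ) - ∫ z in By \ Bx, f z ∂μ := by
      rw [hIx, hIy]; ring
    rw [heq, hsymm_eq, mul_add]
    exact (abs_sub _ _).trans (add_le_add (hsmall _ hfin_xy.lt_top)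
      (hsmall _ hfin_yx.lt_top))
  -- |a - b| ≤ D
  have hable : ∀ (s t : Set X), μ s ≤ μ t + μ (symmDiff s t) := fun s t => by
    calc μ s ≤ μ (t ∪ (s \ t)) := measure_mono (fun z hz => by
          by_cases h : z ∈ t
          · exact Or.inl h
          · exact Or.inr ⟨hz, h⟩)
      _ ≤ μ t + μ (s \ t) := measure_union_le _ _
      _ ≤ μ t + μ (symmDiff s t) := add_le_add_right
          (measure_mono (by rw [Set.symmDiff_def]; exact subset_union_left)) _
  have hsymmfin : μ (symmDiff Bx By) ≠ ∞ := by
    rw [Set.symmDiff_def]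
    exact ((measure_union_le _ _).trans_lt
      (by rw [ENNReal.add_lt_top]; exact ⟨hfin_xy.lt_top, hfin_yx.lt_top⟩)).ne
  have hab : |(μ Bx).toReal - (μ By).toReal| ≤ (μ (symmDiff Bx By)).toReal := by
    rw [abs_sub_le_iff]
    constructor
    · have h1 := hable Bx By
      have := ENNReal.toReal_le_toReal hBxt.ne (by
        exact ENNReal.add_ne_top.2 ⟨hByt.ne, hsymmfin⟩) |>.2 h1
      rw [ENNReal.toReal_add hByt.ne hsymmfin] at this
      linarith
    · have h1 := hable By Bx
      rw [symmDiff_comm] at h1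
      have := ENNReal.toReal_le_toReal hByt.ne (by
        exact ENNReal.add_ne_top.2 ⟨hBxt.ne, hsymmfin⟩) |>.2 h1
      rw [ENNReal.toReal_add hBxt.ne hsymmfin] at this
      linarith
  have hJ : |∫ z in By, f z ∂μ| ≤ C * (μ By).toReal := hsmall _ hByt
  simp only [avgOp, ← hBxdef, ← hBydef]
  exact real_alg hm (hlow x) (hlow y) hIJ hab hJ hC hDnonneg


end helpers

theorem stmt14 {X : Type*} [MetricSpace X] [MeasurableSpace X] (μ : Measure X)
    [BorelSpace X]
    (hball : ∀ (x : X) (t : ℝ), 0 < t → 0 < μ (closedBall x t) ∧ μ (closedBall x t) < ⊤)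
    (hX : Bornology.IsBounded (Set.univ : Set X))
    (hdoub : ∀ s : ℝ, 0 < s → ∃ γ : ℝ, 1 ≤ γ ∧
      ∀ x : X, μ (closedBall x (2 * s)) ≤ ENNReal.ofReal γ * μ (closedBall x s))
    (r : ℝ) (hr : 0 < r)
    (hstarr : ∀ ε : ℝ≥0∞, 0 < ε → ∃ δ : ℝ, 0 < δ ∧ ∀ x y : X, dist x y < δ →
      μ (symmDiff (closedBall x r) (closedBall y r)) < ε) :
    ∀ F : Set (X → ℝ), (∃ C : ℝ≥0, ∀ f ∈ F, MemLp f ⊤ μ ∧ eLpNorm f ⊤ μ ≤ C) →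
      ∀ ε : ℝ≥0∞, 0 < ε → ∃ G : Finset (X → ℝ), ∀ f ∈ F, ∃ g ∈ G,
        eLpNorm (fun x => avgOp μ r f x - g x) ⊤ μ ≤ ε := by
  intro F hFC ε hε
  obtain ⟨C, hF⟩ := hFC
  classical
  by_cases hempty : IsEmpty X
  · refine ⟨{fun _ => 0}, fun f hf => ⟨_, Finset.mem_singleton_self _, ?_⟩⟩
    refine le_trans (eLpNorm_le_of_ae_bound (C := 0)
      (ae_of_all _ fun x => (hempty.false x).elim)) ?_
    simp
  haveI hne : Nonempty X := not_isEmpty_iff.mp hempty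
  set Cr : ℝ := (C : ℝ) with hCrdef
  have hCr0 : (0:ℝ) ≤ Cr := C.coe_nonneg
  have hbd : ∀ f ∈ F, ∀ᵐ x ∂μ, ‖f x‖ ≤ Cr := by
    intro f hf
    have h := (hF f hf).2
    rw [eLpNorm_exponent_top] at h
    filter_upwards [ae_le_eLpNormEssSup (f := f) (μ := μ)] with x hx
    have h1 : (‖f x‖₊ : ℝ≥0∞) ≤ (C : ℝ≥0∞) := hx.trans h
    have h2 : ‖f x‖₊ ≤ C := by exact_mod_cast h1
    calc ‖f x‖ = (‖f x‖₊ : ℝ) := (coe_nnnorm _).symm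
      _ ≤ Cr := NNReal.coe_le_coe.2 h2
  obtain ⟨x₀⟩ := id hne
  have hμtop : μ Set.univ ≠ ∞ := by
    obtain ⟨R, hR⟩ := hX.subset_closedBall x₀
    have hRr : (0:ℝ) < max R r := lt_max_of_lt_right hr
    refine ((measure_mono (?_ : (univ : Set X) ⊆ closedBall x₀ (max R r))).trans_lt
      (hball x₀ _ hRr).2).ne
    exact hR.trans (closedBall_subset_closedBall (le_max_left _ _))
  obtain ⟨m₁, hm₁0, hm₁top, hlow₁⟩ := ball_lower (μ := μ) hball hX hdoub hr
  set mr : ℝ := m₁.toReal with hmrdef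
  have hmr0 : 0 < mr := ENNReal.toReal_pos hm₁0 hm₁top
  have hlowr : ∀ x : X, mr ≤ (μ (closedBall x r)).toReal := fun x =>
    (ENNReal.toReal_le_toReal hm₁top (hball x r hr).2.ne).2 (hlow₁ x)
  set e : ℝ := (min ε 1).toReal with hedef
  have hemin_ne : min ε 1 ≠ ∞ := ne_top_of_le_ne_top ENNReal.one_ne_top (min_le_right _ _)
  have he0 : 0 < e := ENNReal.toReal_pos (lt_min hε zero_lt_one).ne' hemin_ne
  set ε₄ : ℝ := e / 4 with hε₄def
  have hε₄0 : 0 < ε₄ := by positivity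
  obtain ⟨δ, hδ0, hδ⟩ := hstarr (ENNReal.ofReal (ε₄ * mr / (2 * Cr + 1)))
    (ENNReal.ofReal_pos.2 (by positivity))
  have hequi : ∀ f ∈ F, ∀ x y : X, dist x y < δ →
      |avgOp μ r f x - avgOp μ r f y| ≤ ε₄ := by
    intro f hf x y hxy
    have hΔ := hδ x y hxy
    have hD : (μ (symmDiff (closedBall x r) (closedBall y r))).toReal
        < ε₄ * mr / (2 * Cr + 1) := by
      rw [← ENNReal.lt_ofReal_iff_toReal_lt (ne_top_of_lt hΔ)]
      exact hΔ
    have hmain := avg_diff_bound (μ := μ) hball hr hCr0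
      (hF f hf).1.aestronglyMeasurable (hbd f hf) hmr0 hlowr x y
    refine hmain.trans ?_
    rw [div_le_iff₀ hmr0]
    rw [lt_div_iff₀ (by positivity)] at hD
    nlinarith [ENNReal.toReal_nonneg
      (a := μ (symmDiff (closedBall x r) (closedBall y r))), hCr0]
  obtain ⟨m₂, hm₂0, -, hlow₂⟩ := ball_lower (μ := μ) hball hX hdoub
    (show (0:ℝ) < δ / 3 by linarith)
  obtain ⟨t, hcov⟩ := finite_cover hμtop hδ0 hm₂0 hlow₂
  choose idx hidx_mem hidx_lt using hcov
  set N : ℕ := ⌈2 * Cr / ε₄⌉₊ with hNdef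
  set T : Finset ℝ := (Finset.range (N + 1)).image (fun k : ℕ => -Cr + k * ε₄) with hTdef
  have hnet : ∀ a : ℝ, |a| ≤ Cr → ∃ v ∈ T, |a - v| ≤ ε₄ := by
    intro a ha
    have ha1 : -Cr ≤ a := neg_le_of_abs_le ha
    have ha2 : a ≤ Cr := le_of_abs_le ha
    set k : ℕ := ⌊(a + Cr) / ε₄⌋₊ with hkdef
    have hk1 : (k : ℝ) * ε₄ ≤ a + Cr := (le_div_iff₀ hε₄0).1 (Nat.floor_le (div_nonneg (by linarith) hε₄0.le))
    have hk2 : a + Cr < ((k : ℝ) + 1) * ε₄ := by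
      rw [← div_lt_iff₀ hε₄0]
      exact Nat.lt_floor_add_one _
    have hkN : k ≤ N := by
      have hle : (a + Cr) / ε₄ ≤ 2 * Cr / ε₄ := by
        gcongr
        linarith
      exact (Nat.floor_mono hle).trans (Nat.floor_le_ceil _)
    refine ⟨-Cr + k * ε₄,
      Finset.mem_image.2 ⟨k, Finset.mem_range.2 (Nat.lt_succ_of_le hkN), rfl⟩, ?_⟩
    rw [abs_le]
    constructor <;> nlinarith [hk1, hk2]
  have havg_bd : ∀ f ∈ F, ∀ x : X, |avgOp μ r f x| ≤ Cr := fun f hf x =>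
    avg_bound (μ := μ) hball hr (hbd f hf) x
  set W : Finset (↥t → ℝ) := Fintype.piFinset (fun _ => T) with hWdef
  set P : (↥t → ℝ) → Prop :=
    fun w => ∃ f, f ∈ F ∧ ∀ y : ↥t, |avgOp μ r f (y : X) - w y| ≤ ε₄ with hPdef
  set gsel : (↥t → ℝ) → (X → ℝ) :=
    fun w => if h : P w then avgOp μ r h.choose else fun _ => 0 with hgseldef
  refine ⟨W.image gsel, fun f hf => ?_⟩
  have hvals : ∀ y : ↥t, ∃ v ∈ T, |avgOp μ r f (y : X) - v| ≤ ε₄ := fun y =>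
    hnet _ (havg_bd f hf (y : X))
  choose w hwT hwclose using hvals
  have hwW : w ∈ W := Fintype.mem_piFinset.2 hwT
  have hPw : P w := ⟨f, hf, hwclose⟩
  refine ⟨gsel w, Finset.mem_image_of_mem _ hwW, ?_⟩
  have hgw : gsel w = avgOp μ r hPw.choose := by
    simp only [hgseldef]
    rw [dif_pos hPw]
  obtain ⟨hf'F, hf'close⟩ := hPw.choose_spec
  have hpt : ∀ x : X, ‖avgOp μ r f x - gsel w x‖ ≤ e := by
    intro x
    rw [Real.norm_eq_abs, hgw]
    have h1 : |avgOp μ r f x - avgOp μ r f (idx x)| ≤ ε₄ :=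
      hequi f hf x (idx x) (hidx_lt x)
    have h4 : |avgOp μ r hPw.choose (idx x) - avgOp μ r hPw.choose x| ≤ ε₄ := by
      rw [abs_sub_comm]
      exact hequi _ hf'F x (idx x) (hidx_lt x)
    have h2 : |avgOp μ r f (idx x) - w ⟨idx x, hidx_mem x⟩| ≤ ε₄ :=
      hwclose ⟨idx x, hidx_mem x⟩
    have h3 : |w ⟨idx x, hidx_mem x⟩ - avgOp μ r hPw.choose (idx x)| ≤ ε₄ := by
      rw [abs_sub_comm]
      exact hf'close ⟨idx x, hidx_mem x⟩
    have htri1 : |avgOp μ r f x - avgOp μ r hPw.choose x|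
        ≤ |avgOp μ r f x - avgOp μ r f (idx x)|
          + |avgOp μ r f (idx x) - avgOp μ r hPw.choose x| := abs_sub_le _ _ _
    have htri2 : |avgOp μ r f (idx x) - avgOp μ r hPw.choose x|
        ≤ |avgOp μ r f (idx x) - avgOp μ r hPw.choose (idx x)|
          + |avgOp μ r hPw.choose (idx x) - avgOp μ r hPw.choose x| := abs_sub_le _ _ _
    have htri3 : |avgOp μ r f (idx x) - avgOp μ r hPw.choose (idx x)|
        ≤ |avgOp μ r f (idx x) - w ⟨idx x, hidx_mem x⟩|
          + |w ⟨idx x, hidx_mem x⟩ - avgOp μ r hPw.choose (idx x)| := abs_sub_le _ _ _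
    have he4 : ε₄ = e / 4 := hε₄def
    linarith
  calc eLpNorm (fun x => avgOp μ r f x - gsel w x) ⊤ μ
      ≤ μ Set.univ ^ (⊤ : ℝ≥0∞).toReal⁻¹ * ENNReal.ofReal e :=
        eLpNorm_le_of_ae_bound (ae_of_all _ hpt)
    _ = ENNReal.ofReal e := by
        simp
    _ = min ε 1 := ENNReal.ofReal_toReal hemin_ne
    _ ≤ ε := min_le_left _ _
end

section
/- Let X be a bounded metric measure space that is s-doubling and satisfies property (⋆)_s for every s > 0. Then the averaging operator A_r : L^1(X) → L^1(X) is compact. -/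
open MeasureTheory Metric Set ENNReal NNReal

lemma ball_lower_bound {X : Type*} [MetricSpace X] [MeasurableSpace X] (μ : Measure X)
    (hball : ∀ (x : X) (t : ℝ), 0 < t → 0 < μ (closedBall x t) ∧ μ (closedBall x t) < ⊤)
    (hX : Bornology.IsBounded (Set.univ : Set X))
    (hdoub : ∀ s : ℝ, 0 < s → ∃ γ : ℝ, 1 ≤ γ ∧
      ∀ x : X, μ (closedBall x (2 * s)) ≤ ENNReal.ofReal γ * μ (closedBall x s))
    (t : ℝ) (ht : 0 < t) :
    ∃ c : ℝ≥0∞, 0 < c ∧ c ≠ ⊤ ∧ ∀ x : X, c ≤ μ (closedBall x t) := by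
  rcases isEmpty_or_nonempty X with hE | hNE
  · exact ⟨1, zero_lt_one, one_ne_top, fun x => hE.elim x⟩
  obtain ⟨x0⟩ := hNE
  obtain ⟨R, hR⟩ := hX.subset_closedBall x0
  set R' := max R 0 with hR'
  have hR'0 : 0 ≤ R' := le_max_right _ _
  have hcover : ∀ x : X, (Set.univ : Set X) ⊆ closedBall x (2 * R' + 1) := by
    intro x y _
    have hy : y ∈ closedBall x0 R := hR (mem_univ y)
    have hx : x ∈ closedBall x0 R := hR (mem_univ x)
    simp only [mem_closedBall] at *
    have := dist_triangle y x0 x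
    rw [dist_comm x0 x] at this
    have h1 : R ≤ R' := le_max_left _ _
    linarith
  have claim : ∀ k : ℕ, ∃ Γ : ℝ≥0∞, Γ ≠ 0 ∧ Γ ≠ ⊤ ∧
      ∀ x : X, μ (closedBall x (2 ^ k * t)) ≤ Γ * μ (closedBall x t) := by
    intro k
    induction k with
    | zero => exact ⟨1, one_ne_zero, one_ne_top, fun x => by simp⟩
    | succ k ih =>
      obtain ⟨Γ, hΓ0, hΓt, hΓ⟩ := ih
      obtain ⟨γ, hγ1, hγ⟩ := hdoub (2 ^ k * t) (by positivity)
      refine ⟨ENNReal.ofReal γ * Γ, ?_, ?_, fun x => ?_⟩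
      · have : (0:ℝ) < γ := lt_of_lt_of_le zero_lt_one hγ1
        exact mul_ne_zero (by simp [ENNReal.ofReal_pos.2 this, ne_of_gt]) hΓ0
      · exact ENNReal.mul_ne_top ofReal_ne_top hΓt
      · have h1 : (2:ℝ) ^ (k+1) * t = 2 * (2 ^ k * t) := by ring
        rw [h1]
        calc μ (closedBall x (2 * (2 ^ k * t))) ≤ ENNReal.ofReal γ * μ (closedBall x (2 ^ k * t)) := hγ x
          _ ≤ ENNReal.ofReal γ * (Γ * μ (closedBall x t)) := by
              exact mul_le_mul_right (hΓ x) _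
          _ = ENNReal.ofReal γ * Γ * μ (closedBall x t) := by rw [mul_assoc]
  obtain ⟨k, hk⟩ := pow_unbounded_of_one_lt ((2 * R' + 1) / t) (one_lt_two : (1:ℝ) < 2)
  have hkt : 2 * R' + 1 ≤ 2 ^ k * t := by
    rw [div_lt_iff₀ ht] at hk
    linarith
  obtain ⟨Γ, hΓ0, hΓt, hΓ⟩ := claim k
  have huniv_le : ∀ x : X, μ Set.univ ≤ Γ * μ (closedBall x t) := by
    intro x
    calc μ Set.univ ≤ μ (closedBall x (2 ^ k * t)) := by
          apply measure_mono
          exact (hcover x).trans (closedBall_subset_closedBall hkt)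
      _ ≤ Γ * μ (closedBall x t) := hΓ x
  have hμpos : 0 < μ Set.univ :=
    lt_of_lt_of_le (hball x0 t ht).1 (measure_mono (subset_univ _))
  have hμfin : μ Set.univ < ⊤ := by
    calc μ Set.univ ≤ μ (closedBall x0 (2 * R' + 1)) := measure_mono (hcover x0)
      _ < ⊤ := (hball x0 (2 * R' + 1) (by linarith)).2
  refine ⟨μ Set.univ / Γ, ENNReal.div_pos hμpos.ne' hΓt, ?_, fun x => ?_⟩
  · exact (ENNReal.div_lt_top hμfin.ne hΓ0).ne
  · rw [ENNReal.div_le_iff hΓ0 hΓt]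
    rw [mul_comm]
    exact huniv_le x

lemma exists_net {X : Type*} [MetricSpace X] [MeasurableSpace X] (μ : Measure X)
    [BorelSpace X]
    (hball : ∀ (x : X) (t : ℝ), 0 < t → 0 < μ (closedBall x t) ∧ μ (closedBall x t) < ⊤)
    (hX : Bornology.IsBounded (Set.univ : Set X))
    (hdoub : ∀ s : ℝ, 0 < s → ∃ γ : ℝ, 1 ≤ γ ∧
      ∀ x : X, μ (closedBall x (2 * s)) ≤ ENNReal.ofReal γ * μ (closedBall x s))
    (ρ : ℝ) (hρ : 0 < ρ) :
    ∃ (n : ℕ) (p : Fin n → X), (Set.univ : Set X) ⊆ ⋃ i, ball (p i) ρ := by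
  classical
  rcases isEmpty_or_nonempty X with hE | hNE
  · exact ⟨0, fun i => absurd i.2 (by omega), fun x _ => hE.elim x⟩
  obtain ⟨c, hc0, hct, hc⟩ := ball_lower_bound μ hball hX hdoub (ρ/3) (by linarith)
  have hμfin : μ Set.univ < ⊤ := by
    obtain ⟨x0⟩ := hNE
    obtain ⟨R, hR⟩ := hX.subset_closedBall x0
    calc μ Set.univ ≤ μ (closedBall x0 (max R 1)) := by
          apply measure_mono; intro y _;
          exact closedBall_subset_closedBall (le_max_left _ _) (hR (mem_univ y))
      _ < ⊤ := (hball x0 (max R 1) (by positivity)).2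
  set P : Finset X → Prop := fun F => ∀ x ∈ F, ∀ y ∈ F, x ≠ y → ρ ≤ dist x y with hP
  obtain ⟨m, hm⟩ := ENNReal.exists_nat_gt (ENNReal.div_lt_top hμfin.ne hc0.ne').ne
  have hcard : ∀ F : Finset X, P F → F.card ≤ m := by
    intro F hF
    have hdisj : (F : Set X).PairwiseDisjoint (fun y => closedBall y (ρ/3)) := by
      intro a ha b hb hab
      apply closedBall_disjoint_closedBall
      have := hF a ha b hb hab
      linarith
    have hsum : (F.card : ℝ≥0∞) * c ≤ μ Set.univ := by
      calc (F.card : ℝ≥0∞) * c = ∑ _y ∈ F, c := by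
            rw [Finset.sum_const, nsmul_eq_mul]
        _ ≤ ∑ y ∈ F, μ (closedBall y (ρ/3)) := Finset.sum_le_sum fun y _ => hc y
        _ = μ (⋃ y ∈ F, closedBall y (ρ/3)) :=
            (measure_biUnion_finset hdisj fun y _ => measurableSet_closedBall).symm
        _ ≤ μ Set.univ := measure_mono (subset_univ _)
    by_contra hlt
    push_neg at hlt
    have h1 : (m : ℝ≥0∞) * c < (F.card : ℝ≥0∞) * c := by
      apply ENNReal.mul_lt_mul_left hc0.ne' hct
      exact_mod_cast hlt
    have h2 : μ Set.univ < (m : ℝ≥0∞) * c := by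
      rwa [ENNReal.div_lt_iff (Or.inl hc0.ne') (Or.inl hct)] at hm
    exact absurd ((h2.trans h1).trans_le hsum) (lt_irrefl _)
  set s : Set ℕ := {k | ∃ F : Finset X, P F ∧ F.card = k} with hs
  have hsne : s.Nonempty := ⟨0, ∅, by simp [hP], rfl⟩
  have hsbdd : BddAbove s := ⟨m, fun k ⟨F, hF, hFk⟩ => hFk ▸ hcard F hF⟩
  obtain ⟨F₀, hF₀, hF₀card⟩ := Nat.sSup_mem hsne hsbdd
  have hcov : ∀ x : X, ∃ y ∈ F₀, dist x y < ρ := by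
    intro x
    by_contra hx
    push_neg at hx
    have hxF : x ∉ F₀ := fun hmem => absurd (hx x hmem) (by simp [hρ])
    have hP' : P (insert x F₀) := by
      intro a ha b hb hab
      simp only [Finset.mem_insert] at ha hb
      rcases ha with rfl | ha
      · rcases hb with rfl | hb
        · exact absurd rfl hab
        · exact hx b hb
      · rcases hb with rfl | hb
        · rw [dist_comm]; exact hx a ha
        · exact hF₀ a ha b hb hab
    have : F₀.card + 1 ∈ s := ⟨insert x F₀, hP', Finset.card_insert_of_notMem hxF⟩
    have := le_csSup hsbdd this
    omega
  refine ⟨F₀.card, fun i => (F₀.equivFin.symm i : X), fun x _ => ?_⟩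
  obtain ⟨y, hy, hxy⟩ := hcov x
  refine mem_iUnion.2 ⟨F₀.equivFin ⟨y, hy⟩, ?_⟩
  simp only [mem_ball, Equiv.symm_apply_apply]
  exact hxy

lemma core_est {X : Type*} [MetricSpace X] [MeasurableSpace X] [BorelSpace X] (μ : Measure X)
    {r δ cb Cb eb : ℝ} (hδ0 : 0 < δ) (hδr : δ < r)
    (hfint : ∀ (x : X) (t : ℝ), 0 < t → μ (closedBall x t) < ⊤)
    (hcb : 0 < cb)
    (hcle : ∀ x : X, cb ≤ (μ (closedBall x r)).toReal)
    {f : X → ℝ} (hf : Integrable f μ) (hfC : ∫ y, |f y| ∂μ ≤ Cb)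
    (hann : ∀ x : X, (μ (closedBall x (r + δ) \ closedBall x (r - δ))).toReal ≤ eb)
    (x x' : X) (hxx' : dist x x' ≤ δ) :
    |avgOp μ r f x - avgOp μ r f x'| ≤
      cb⁻¹ * (∫ y in closedBall x (r + δ) \ closedBall x (r - δ), |f y| ∂μ)
        + cb⁻¹ * cb⁻¹ * eb * Cb := by
  set B := closedBall x r with hB
  set B' := closedBall x' r with hB'
  set A := closedBall x (r + δ) \ closedBall x (r - δ) with hA
  set a := (μ B).toReal with ha
  set b := (μ B').toReal with hb
  set I := ∫ y in B, f y ∂μ with hI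
  set J := ∫ y in B', f y ∂μ with hJdef
  have hca : cb ≤ a := hcle x
  have hcb' : cb ≤ b := hcle x'
  have ha0 : 0 < a := lt_of_lt_of_le hcb hca
  have hb0 : 0 < b := lt_of_lt_of_le hcb hcb'
  -- inclusions
  have hB'sub : B' ⊆ closedBall x (r + δ) := by
    intro y hy
    simp only [hB', mem_closedBall] at *
    have := dist_triangle y x' x
    rw [dist_comm x' x] at this
    linarith
  have hsubB' : closedBall x (r - δ) ⊆ B' := by
    intro y hy
    simp only [hB', mem_closedBall] at *
    have := dist_triangle y x x'
    linarith
  have hBsub : B ⊆ closedBall x (r + δ) :=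
    closedBall_subset_closedBall (by linarith)
  have hsubB : closedBall x (r - δ) ⊆ B :=
    closedBall_subset_closedBall (by linarith)
  have hBdiff : B \ B' ⊆ A := fun y hy => by
    constructor
    · exact hBsub hy.1
    · intro hc
      exact hy.2 (hsubB' hc)
  have hB'diff : B' \ B ⊆ A := fun y hy => by
    constructor
    · exact hB'sub hy.1
    · intro hc
      exact hy.2 (hsubB hc)
  have hAmeas : MeasurableSet A := measurableSet_closedBall.diff measurableSet_closedBall
  have hfabs : Integrable (fun y => |f y|) μ := hf.abs
  have hφ0 : 0 ≤ ∫ y in A, |f y| ∂μ :=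
    setIntegral_nonneg hAmeas fun y _ => abs_nonneg _
  -- step 1 : |I - J| ≤ ∫_A |f|
  have hIJ : |I - J| ≤ ∫ y in A, |f y| ∂μ := by
    have hsplitB : I = (∫ y in B ∩ B', f y ∂μ) + ∫ y in B \ B', f y ∂μ := by
      rw [hI, ← setIntegral_union (disjoint_of_subset_left inter_subset_right disjoint_sdiff_right)
        (measurableSet_closedBall.diff measurableSet_closedBall)
        (hf.integrableOn) (hf.integrableOn), Set.inter_union_diff]
    have hsplitB' : J = (∫ y in B ∩ B', f y ∂μ) + ∫ y in B' \ B, f y ∂μ := by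
      rw [hJdef, ← setIntegral_union
        (disjoint_of_subset_left inter_subset_left disjoint_sdiff_right)
        (measurableSet_closedBall.diff measurableSet_closedBall)
        (hf.integrableOn) (hf.integrableOn), Set.inter_comm, Set.inter_union_diff]
    have heq : I - J = (∫ y in B \ B', f y ∂μ) - ∫ y in B' \ B, f y ∂μ := by
      rw [hsplitB, hsplitB']; ring
    rw [heq]
    have h1 : |(∫ y in B \ B', f y ∂μ) - ∫ y in B' \ B, f y ∂μ| ≤
        (∫ y in B \ B', |f y| ∂μ) + ∫ y in B' \ B, |f y| ∂μ := by
      refine (abs_sub _ _).trans (add_le_add ?_ ?_) <;>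
      · rw [← Real.norm_eq_abs]
        refine (norm_integral_le_integral_norm _).trans ?_
        simp [Real.norm_eq_abs, le_refl]
    refine h1.trans ?_
    rw [← setIntegral_union (disjoint_sdiff_sdiff)
      (measurableSet_closedBall.diff measurableSet_closedBall)
      (hfabs.integrableOn) (hfabs.integrableOn)]
    refine setIntegral_mono_set hfabs.integrableOn
      (Filter.Eventually.of_forall fun y => abs_nonneg _) (HasSubset.Subset.eventuallyLE ?_)
    exact union_subset hBdiff hB'diff
  -- step 2 : |a - b| ≤ eb
  have hab : |a - b| ≤ eb := by
    set sm := (μ (closedBall x (r - δ))).toReal with hsm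
    set tm := (μ (closedBall x (r + δ))).toReal with htm
    have hfin : μ (closedBall x (r + δ)) ≠ ⊤ := (hfint x (r + δ) (by linarith)).ne
    have h1 : sm ≤ a := ENNReal.toReal_mono (hfint x r (by linarith)).ne (measure_mono hsubB)
    have h2 : a ≤ tm := ENNReal.toReal_mono hfin (measure_mono hBsub)
    have h3 : sm ≤ b := ENNReal.toReal_mono (hfint x' r (by linarith)).ne (measure_mono hsubB')
    have h4 : b ≤ tm := ENNReal.toReal_mono hfin (measure_mono hB'sub)
    have h5 : (μ A).toReal = tm - sm := by
      rw [measure_diff (closedBall_subset_closedBall (by linarith : r - δ ≤ r + δ))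
        (measurableSet_closedBall.nullMeasurableSet) (hfint x (r - δ) (by linarith)).ne]
      rw [ENNReal.toReal_sub_of_le (measure_mono (closedBall_subset_closedBall (by linarith))) hfin]
    have h6 : tm - sm ≤ eb := h5 ▸ hann x
    rw [abs_sub_le_iff]
    constructor <;> linarith
  have heb0 : 0 ≤ eb := le_trans ENNReal.toReal_nonneg (hann x)
  -- step 3 : |J| ≤ Cb
  have hJle : |J| ≤ Cb := by
    have : |J| ≤ ∫ y in B', |f y| ∂μ := by
      rw [← Real.norm_eq_abs]
      refine (norm_integral_le_integral_norm _).trans ?_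
      simp [Real.norm_eq_abs, le_refl]
    refine this.trans (le_trans ?_ hfC)
    exact setIntegral_le_integral hfabs (Filter.Eventually.of_forall fun y => abs_nonneg _)
  have hCb0 : 0 ≤ Cb := le_trans (abs_nonneg _) hJle
  -- final arithmetic
  have hgx : avgOp μ r f x = a⁻¹ * I := rfl
  have hgx' : avgOp μ r f x' = b⁻¹ * J := rfl
  rw [hgx, hgx']
  have hsplit : a⁻¹ * I - b⁻¹ * J = a⁻¹ * (I - J) + (a⁻¹ - b⁻¹) * J := by ring
  rw [hsplit]
  have hterm1 : |a⁻¹ * (I - J)| ≤ cb⁻¹ * (∫ y in A, |f y| ∂μ) := by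
    rw [abs_mul, abs_of_nonneg (inv_nonneg.2 ha0.le)]
    exact mul_le_mul (inv_anti₀ hcb hca) hIJ (abs_nonneg _) (inv_nonneg.2 hcb.le)
  have hterm2 : |(a⁻¹ - b⁻¹) * J| ≤ cb⁻¹ * cb⁻¹ * eb * Cb := by
    rw [abs_mul]
    have hdiff : a⁻¹ - b⁻¹ = (b - a) / (a * b) := by field_simp
    have habs : |a⁻¹ - b⁻¹| ≤ eb / (cb * cb) := by
      rw [hdiff, abs_div, abs_of_pos (mul_pos ha0 hb0), abs_sub_comm]
      exact div_le_div₀ heb0 hab (mul_pos hcb hcb) (mul_le_mul hca hcb' hcb.le ha0.le)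
    calc |a⁻¹ - b⁻¹| * |J| ≤ (eb / (cb * cb)) * Cb :=
          mul_le_mul habs hJle (abs_nonneg _) (by positivity)
      _ = cb⁻¹ * cb⁻¹ * eb * Cb := by field_simp
  calc |a⁻¹ * (I - J) + (a⁻¹ - b⁻¹) * J| ≤ |a⁻¹ * (I - J)| + |(a⁻¹ - b⁻¹) * J| := abs_add_le _ _
    _ ≤ cb⁻¹ * (∫ y in A, |f y| ∂μ) + cb⁻¹ * cb⁻¹ * eb * Cb := add_le_add hterm1 hterm2

lemma tonelli_est {X : Type*} [MetricSpace X] [MeasurableSpace X] [BorelSpace X]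
    [SecondCountableTopology X]
    (μ : Measure X) [SFinite μ] {r δ : ℝ} {ε' : ℝ≥0∞}
    (hann : ∀ x : X, μ (closedBall x (r + δ) \ closedBall x (r - δ)) ≤ ε')
    {f' : X → ℝ} (hf' : Measurable f') :
    Measurable (fun x => ∫⁻ y in closedBall x (r + δ) \ closedBall x (r - δ), ‖f' y‖₊ ∂μ) ∧
    ∫⁻ x, (∫⁻ y in closedBall x (r + δ) \ closedBall x (r - δ), ‖f' y‖₊ ∂μ) ∂μ ≤
      ε' * ∫⁻ y, ‖f' y‖₊ ∂μ := by
  set S : Set (X × X) :=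
    {p : X × X | p.2 ∈ closedBall p.1 (r + δ) \ closedBall p.1 (r - δ)} with hS
  have hSmeas : MeasurableSet S := by
    have h1 : IsClosed {p : X × X | dist p.2 p.1 ≤ r + δ} :=
      isClosed_le (continuous_snd.dist continuous_fst) continuous_const
    have h2 : IsClosed {p : X × X | dist p.2 p.1 ≤ r - δ} :=
      isClosed_le (continuous_snd.dist continuous_fst) continuous_const
    exact h1.measurableSet.diff h2.measurableSet
  set F : X × X → ℝ≥0∞ := S.indicator (fun p => (‖f' p.2‖₊ : ℝ≥0∞)) with hF
  have hFmeas : Measurable F :=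
    Measurable.indicator ((hf'.comp measurable_snd).nnnorm.coe_nnreal_ennreal) hSmeas
  have key1 : ∀ x : X, (∫⁻ y in closedBall x (r + δ) \ closedBall x (r - δ), ‖f' y‖₊ ∂μ)
      = ∫⁻ y, F (x, y) ∂μ := by
    intro x
    rw [← lintegral_indicator (measurableSet_closedBall.diff measurableSet_closedBall)]
    refine lintegral_congr fun y => ?_
    by_cases hy : y ∈ closedBall x (r + δ) \ closedBall x (r - δ)
    · rw [Set.indicator_of_mem hy]
      exact (Set.indicator_of_mem (show (x, y) ∈ S from hy) (fun p : X × X => (‖f' p.2‖₊ : ℝ≥0∞))).symm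
    · rw [Set.indicator_of_notMem hy]
      exact (Set.indicator_of_notMem (show (x, y) ∉ S from hy) (fun p : X × X => (‖f' p.2‖₊ : ℝ≥0∞))).symm
  have key2 : ∀ y : X, (∫⁻ x, F (x, y) ∂μ) ≤ (‖f' y‖₊ : ℝ≥0∞) * ε' := by
    intro y
    have hrepr : ∀ x : X, F (x, y) =
        (closedBall y (r + δ) \ closedBall y (r - δ)).indicator
          (fun _ => (‖f' y‖₊ : ℝ≥0∞)) x := by
      intro x
      have hmem : ((x, y) ∈ S) ↔ x ∈ closedBall y (r + δ) \ closedBall y (r - δ) := by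
        simp only [hS, mem_setOf_eq, mem_diff, mem_closedBall]
        rw [dist_comm y x]
      by_cases hx : x ∈ closedBall y (r + δ) \ closedBall y (r - δ)
      · rw [Set.indicator_of_mem hx]
        exact Set.indicator_of_mem (hmem.2 hx) (fun p : X × X => (‖f' p.2‖₊ : ℝ≥0∞))
      · rw [Set.indicator_of_notMem hx]
        exact Set.indicator_of_notMem (fun hc => hx (hmem.1 hc)) (fun p : X × X => (‖f' p.2‖₊ : ℝ≥0∞))
    calc (∫⁻ x, F (x, y) ∂μ)
        = ∫⁻ x, (closedBall y (r + δ) \ closedBall y (r - δ)).indicator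
            (fun _ => (‖f' y‖₊ : ℝ≥0∞)) x ∂μ := lintegral_congr hrepr
      _ = (‖f' y‖₊ : ℝ≥0∞) * μ (closedBall y (r + δ) \ closedBall y (r - δ)) := by
          rw [lintegral_indicator (measurableSet_closedBall.diff measurableSet_closedBall)]
          simp [lintegral_const, Measure.restrict_apply, MeasurableSet.univ]
      _ ≤ (‖f' y‖₊ : ℝ≥0∞) * ε' := mul_le_mul_right (hann y) _
  constructor
  · simp_rw [key1]
    exact hFmeas.lintegral_prod_right'
  · calc ∫⁻ x, (∫⁻ y in closedBall x (r + δ) \ closedBall x (r - δ), ‖f' y‖₊ ∂μ) ∂μ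
        = ∫⁻ x, ∫⁻ y, F (x, y) ∂μ ∂μ := lintegral_congr key1
      _ = ∫⁻ y, ∫⁻ x, F (x, y) ∂μ ∂μ := by
          exact lintegral_lintegral_swap hFmeas.aemeasurable
      _ ≤ ∫⁻ y, (‖f' y‖₊ : ℝ≥0∞) * ε' ∂μ := lintegral_mono key2
      _ = (∫⁻ y, (‖f' y‖₊ : ℝ≥0∞) ∂μ) * ε' := lintegral_mul_const _ hf'.nnnorm.coe_nnreal_ennreal
      _ = ε' * ∫⁻ y, (‖f' y‖₊ : ℝ≥0∞) ∂μ := mul_comm _ _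

lemma piece_est {X : Type*} [MeasurableSpace X] (μ : Measure X) {E : Set X}
    (hE : MeasurableSet E) (hEfin : μ E ≠ ⊤) (hE0 : μ E ≠ 0)
    {g : X → ℝ} (hg : Integrable g μ) {x : X} (hx : x ∈ E)
    {bound : ℝ} (hbound : ∀ x' ∈ E, |g x - g x'| ≤ bound) :
    |g x - (μ E).toReal⁻¹ * ∫ y in E, g y ∂μ| ≤ bound := by
  set mE := (μ E).toReal with hmE
  have hmE0 : 0 < mE := ENNReal.toReal_pos hE0 hEfin
  have hconst : IntegrableOn (fun _ => g x) E μ :=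
    integrableOn_const hEfin
  have h2 : g x - mE⁻¹ * ∫ y in E, g y ∂μ = mE⁻¹ * ∫ y in E, (g x - g y) ∂μ := by
    rw [integral_sub hconst hg.integrableOn, setIntegral_const, measureReal_def, ← hmE, smul_eq_mul, mul_sub,
      ← mul_assoc, inv_mul_cancel₀ hmE0.ne', one_mul]
  have hbound0 : 0 ≤ bound := le_trans (abs_nonneg _) (hbound x hx)
  rw [h2, abs_mul, abs_of_nonneg (inv_nonneg.2 hmE0.le)]
  have h3 : |∫ y in E, (g x - g y) ∂μ| ≤ mE * bound := by
    rw [← Real.norm_eq_abs]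
    refine (norm_integral_le_integral_norm _).trans ?_
    calc ∫ y in E, ‖g x - g y‖ ∂μ ≤ ∫ _y in E, bound ∂μ := by
          refine setIntegral_mono_on ((hconst.sub hg.integrableOn).norm) 
            (integrableOn_const hEfin) hE ?_
          intro y hy
          rw [Real.norm_eq_abs]
          exact hbound y hy
      _ = mE * bound := by rw [setIntegral_const, smul_eq_mul, measureReal_def]
  calc mE⁻¹ * |∫ y in E, (g x - g y) ∂μ| ≤ mE⁻¹ * (mE * bound) :=
        mul_le_mul_of_nonneg_left h3 (inv_nonneg.2 hmE0.le)
    _ = bound := by field_simp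

lemma partition_of_net {X : Type*} [MetricSpace X] [MeasurableSpace X] [BorelSpace X]
    {n : ℕ} (p : Fin n → X) (ρ : ℝ) (hcov : (Set.univ : Set X) ⊆ ⋃ i, ball (p i) ρ) :
    ∃ E : Fin n → Set X, (∀ i, MeasurableSet (E i)) ∧
      (∀ x : X, ∃ i, x ∈ E i) ∧
      (∀ i j, i ≠ j → Disjoint (E i) (E j)) ∧
      (∀ i, E i ⊆ ball (p i) ρ) := by
  classical
  refine ⟨fun i => ball (p i) ρ \ ⋃ j : Fin n, ⋃ _ : j < i, ball (p j) ρ,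
    fun i => measurableSet_ball.diff
      (MeasurableSet.iUnion fun j => MeasurableSet.iUnion fun _ => measurableSet_ball),
    ?_, ?_, fun i => diff_subset⟩
  · intro x
    have hx := hcov (mem_univ x)
    set T : Finset (Fin n) := Finset.univ.filter (fun i => x ∈ ball (p i) ρ) with hT
    have hTne : T.Nonempty := by
      obtain ⟨i, hi⟩ := mem_iUnion.1 hx
      exact ⟨i, by simp only [hT, Finset.mem_filter, Finset.mem_univ, true_and]; exact hi⟩
    refine ⟨T.min' hTne, ?_, ?_⟩
    · have := T.min'_mem hTne
      simp only [hT, Finset.mem_filter] at this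
      exact this.2
    · intro hc
      obtain ⟨j, hj⟩ := mem_iUnion.1 hc
      obtain ⟨hji, hxj⟩ := mem_iUnion.1 hj
      have : j ∈ T := by simp only [hT, Finset.mem_filter, Finset.mem_univ, true_and]; exact hxj
      exact absurd (T.min'_le j this) (not_le.2 hji)
  · intro i j hij
    rcases lt_or_gt_of_ne hij with h | h
    · rw [Set.disjoint_left]
      rintro x ⟨hxi, -⟩ ⟨-, hxj⟩
      exact hxj (mem_iUnion.2 ⟨i, mem_iUnion.2 ⟨h, hxi⟩⟩)
    · rw [Set.disjoint_left]
      rintro x ⟨-, hxi⟩ ⟨hxj, -⟩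
      exact hxi (mem_iUnion.2 ⟨j, mem_iUnion.2 ⟨h, hxj⟩⟩)

lemma sum_indicator_eq {X : Type*} {n : ℕ} {E : Fin n → Set X}
    (hdisj : ∀ i j : Fin n, i ≠ j → Disjoint (E i) (E j)) (c : Fin n → ℝ)
    {x : X} {i : Fin n} (hx : x ∈ E i) :
    ∑ j : Fin n, (E j).indicator (fun _ => c j) x = c i := by
  rw [Finset.sum_eq_single i]
  · exact Set.indicator_of_mem hx _
  · intro j _ hji
    exact Set.indicator_of_notMem (fun hxj => (hdisj j i hji).le_bot ⟨hxj, hx⟩) _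
  · exact fun h => absurd (Finset.mem_univ i) h
set_option maxHeartbeats 1000000 in
theorem stmt15 {X : Type*} [MetricSpace X] [MeasurableSpace X] (μ : Measure X)
    [BorelSpace X]
    (hball : ∀ (x : X) (t : ℝ), 0 < t → 0 < μ (closedBall x t) ∧ μ (closedBall x t) < ⊤)
    (hX : Bornology.IsBounded (Set.univ : Set X))
    (hdoub : ∀ s : ℝ, 0 < s → ∃ γ : ℝ, 1 ≤ γ ∧
      ∀ x : X, μ (closedBall x (2 * s)) ≤ ENNReal.ofReal γ * μ (closedBall x s))
    (hstar : ∀ s : ℝ, 0 < s → ∀ ε : ℝ≥0∞, 0 < ε → ∃ δ : ℝ, 0 < δ ∧ δ < s ∧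
      ∀ x : X, μ (closedBall x (s + δ) \ closedBall x (s - δ)) < ε)
    (r : ℝ) (hr : 0 < r)
    (hmap : ∀ f : X → ℝ, MemLp f 1 μ → MemLp (avgOp μ r f) 1 μ) :
    ∀ F : Set (X → ℝ), (∃ C : ℝ≥0, ∀ f ∈ F, MemLp f 1 μ ∧ eLpNorm f 1 μ ≤ C) →
      ∀ ε : ℝ≥0∞, 0 < ε → ∃ G : Finset (X → ℝ), ∀ f ∈ F, ∃ g ∈ G,
        eLpNorm (fun x => avgOp μ r f x - g x) 1 μ ≤ ε := by
  classical
  intro F hF ε hε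
  obtain ⟨C, hC⟩ := hF
  obtain ⟨e, he0, heε⟩ : ∃ e : ℝ, 0 < e ∧ ENNReal.ofReal e ≤ ε := by
    rcases eq_or_ne ε ⊤ with rfl | hne
    · exact ⟨1, one_pos, le_top⟩
    · exact ⟨ε.toReal, ENNReal.toReal_pos hε.ne' hne, by rw [ENNReal.ofReal_toReal hne]⟩
  suffices h : ∃ G : Finset (X → ℝ), ∀ f ∈ F, ∃ g ∈ G,
      eLpNorm (fun x => avgOp μ r f x - g x) 1 μ ≤ ENNReal.ofReal e by
    obtain ⟨G, hG⟩ := h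
    refine ⟨G, fun f hf => ?_⟩
    obtain ⟨g, hg, hgle⟩ := hG f hf
    exact ⟨g, hg, hgle.trans heε⟩
  -- finiteness of the measure
  have hμfin : μ Set.univ < ⊤ := by
    rcases isEmpty_or_nonempty X with hE | hNE
    · rw [Set.univ_eq_empty_iff.2 hE, measure_empty]
      simp
    · obtain ⟨x0⟩ := hNE
      obtain ⟨R, hR⟩ := hX.subset_closedBall x0
      calc μ Set.univ ≤ μ (closedBall x0 (max R 1)) := by
            apply measure_mono
            intro y _
            exact closedBall_subset_closedBall (le_max_left _ _) (hR (mem_univ y))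
        _ < ⊤ := (hball x0 (max R 1) (by positivity)).2
  haveI hfinM : IsFiniteMeasure μ := ⟨hμfin⟩
  -- second countability
  have hnet : ∀ ρ : ℝ, 0 < ρ →
      ∃ (n : ℕ) (p : Fin n → X), (Set.univ : Set X) ⊆ ⋃ i, ball (p i) ρ :=
    fun ρ hρ => exists_net μ hball hX hdoub ρ hρ
  haveI hsc : SecondCountableTopology X := by
    apply Metric.secondCountable_of_almost_dense_set
    intro ρ hρ
    obtain ⟨n, p, hcov⟩ := hnet ρ hρ
    refine ⟨Set.range p, (Set.finite_range p).countable, fun x => ?_⟩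
    obtain ⟨i, hi⟩ := mem_iUnion.1 (hcov (mem_univ x))
    exact ⟨p i, mem_range_self i, (mem_ball.1 hi).le⟩
  -- uniform lower bound on balls of radius r
  obtain ⟨c, hc0, hctop, hc⟩ := ball_lower_bound μ hball hX hdoub r hr
  set cb := (min c 1).toReal with hcbdef
  have hcb0 : 0 < cb :=
    ENNReal.toReal_pos (lt_min hc0 zero_lt_one).ne'
      (ne_top_of_le_ne_top one_ne_top (min_le_right _ _))
  have hcble : ∀ x : X, cb ≤ (μ (closedBall x r)).toReal := fun x =>
    ENNReal.toReal_mono (hball x r hr).2.ne ((min_le_left c 1).trans (hc x))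
  -- constants
  set μb := (μ Set.univ).toReal with hμbdef
  have hμb0 : 0 ≤ μb := ENNReal.toReal_nonneg
  set Cb := max (C : ℝ) 1 with hCbdef
  have hCb0 : (0:ℝ) < Cb := lt_of_lt_of_le one_pos (le_max_right _ _)
  set M := cb⁻¹ * Cb with hMdef
  have hM0 : 0 < M := by positivity
  set D := cb⁻¹ * Cb + cb⁻¹ * cb⁻¹ * Cb * μb + 1 with hDdef
  have hD0 : 0 < D := by positivity
  set eb := (e / 2) / D with hebdef
  have heb0 : 0 < eb := by positivity
  obtain ⟨δ, hδ0, hδr, hann⟩ := hstar r hr (ENNReal.ofReal eb) (ENNReal.ofReal_pos.2 heb0)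
  have hannR : ∀ x : X, (μ (closedBall x (r + δ) \ closedBall x (r - δ))).toReal ≤ eb :=
    fun x => ENNReal.toReal_le_of_le_ofReal heb0.le (hann x).le
  -- partition
  obtain ⟨n, p, hcov⟩ := hnet (δ / 2) (by linarith)
  obtain ⟨E, hEmeas, hEmem, hEdisj, hEsub⟩ := partition_of_net p (δ / 2) hcov
  have hEdiam : ∀ i, ∀ x ∈ E i, ∀ y ∈ E i, dist x y ≤ δ := by
    intro i x hx y hy
    have h1 := mem_ball.1 (hEsub i hx)
    have h2 := mem_ball.1 (hEsub i hy)
    have := dist_triangle x (p i) y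
    rw [dist_comm (p i) y] at this
    linarith
  have hEfin : ∀ i, μ (E i) ≠ ⊤ :=
    fun i => (lt_of_le_of_lt (measure_mono (subset_univ _)) hμfin).ne
  -- rounding grid
  set η := (e / 2) / (μb + 1) with hηdef
  have hη0 : 0 < η := by positivity
  set N := ⌈M / η⌉₊ with hNdef
  have hMN : M ≤ (N : ℝ) * η := (div_le_iff₀ hη0).1 (Nat.le_ceil _)
  set K : Finset ℝ := (Finset.Icc (-(N : ℤ)) (N : ℤ)).image (fun k : ℤ => (k : ℝ) * η) with hKdef
  set G : Finset (X → ℝ) := (Fintype.piFinset fun _ : Fin n => K).image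
    (fun v => fun x => ∑ i, Set.indicator (E i) (fun _ => v i) x) with hGdef
  refine ⟨G, fun f hf => ?_⟩
  obtain ⟨hfmem, hfC⟩ := hC f hf
  have hfint : Integrable f μ := memLp_one_iff_integrable.1 hfmem
  -- L¹ bound on f
  have hlint : ∫⁻ y, (‖f y‖₊ : ℝ≥0∞) ∂μ ≤ (C : ℝ≥0∞) := by
    have := eLpNorm_one_eq_lintegral_enorm (f := f) (μ := μ); rw [this] at hfC; exact hfC
  have hfabs : ∫ y, |f y| ∂μ ≤ Cb := by
    have h1 : ENNReal.ofReal (∫ y, ‖f y‖ ∂μ) = ∫⁻ y, (‖f y‖₊ : ℝ≥0∞) ∂μ :=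
      ofReal_integral_norm_eq_lintegral_enorm hfint
    have h2 : (0:ℝ) ≤ ∫ y, ‖f y‖ ∂μ := integral_nonneg fun y => norm_nonneg _
    have h3 : ∫ y, ‖f y‖ ∂μ ≤ (C : ℝ) := by
      have := ENNReal.toReal_mono ENNReal.coe_ne_top (h1 ▸ hlint)
      rwa [ENNReal.toReal_ofReal h2, ENNReal.coe_toReal] at this
    calc ∫ y, |f y| ∂μ = ∫ y, ‖f y‖ ∂μ := by simp only [Real.norm_eq_abs]
      _ ≤ (C : ℝ) := h3
      _ ≤ Cb := le_max_left _ _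
  set gg := avgOp μ r f with hggdef
  have hgmem : MemLp (avgOp μ r f) 1 μ := hmap f hfmem
  have hgint : Integrable gg μ := memLp_one_iff_integrable.1 hgmem
  have hgbdd : ∀ x, |gg x| ≤ M := by
    intro x
    have hrepr : gg x = (μ (closedBall x r)).toReal⁻¹ * ∫ y in closedBall x r, f y ∂μ := rfl
    rw [hrepr, abs_mul, abs_of_nonneg (inv_nonneg.2 ENNReal.toReal_nonneg)]
    have h1 : |∫ y in closedBall x r, f y ∂μ| ≤ Cb := by
      rw [← Real.norm_eq_abs]
      refine (norm_integral_le_integral_norm _).trans (le_trans ?_ hfabs)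
      have : ∫ y in closedBall x r, ‖f y‖ ∂μ ≤ ∫ y, ‖f y‖ ∂μ :=
        setIntegral_le_integral hfint.norm (Filter.Eventually.of_forall fun y => norm_nonneg _)
      simpa only [Real.norm_eq_abs] using this
    have h2 : (μ (closedBall x r)).toReal⁻¹ ≤ cb⁻¹ := inv_anti₀ hcb0 (hcble x)
    exact mul_le_mul h2 h1 (abs_nonneg _) (inv_nonneg.2 hcb0.le)
  -- piece averages
  set cf : Fin n → ℝ := fun i => (μ (E i)).toReal⁻¹ * ∫ y in E i, gg y ∂μ with hcfdef
  have hcfM : ∀ i, |cf i| ≤ M := by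
    intro i
    rcases eq_or_ne (μ (E i)) 0 with h0 | h0
    · have hz : cf i = 0 := by
        show (μ (E i)).toReal⁻¹ * ∫ y in E i, gg y ∂μ = 0
        rw [h0]
        simp
      rw [hz, abs_zero]
      exact hM0.le
    · have hmE0 : 0 < (μ (E i)).toReal := ENNReal.toReal_pos h0 (hEfin i)
      have h1 : |∫ y in E i, gg y ∂μ| ≤ (μ (E i)).toReal * M := by
        rw [← Real.norm_eq_abs]
        refine (norm_integral_le_integral_norm _).trans ?_
        calc ∫ y in E i, ‖gg y‖ ∂μ ≤ ∫ _y in E i, M ∂μ := by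
              refine setIntegral_mono_on hgint.norm.integrableOn
                (integrableOn_const (hEfin i)) (hEmeas i) ?_
              intro y _
              rw [Real.norm_eq_abs]
              exact hgbdd y
          _ = (μ (E i)).toReal * M := by rw [setIntegral_const, smul_eq_mul, measureReal_def]
      calc |cf i| = (μ (E i)).toReal⁻¹ * |∫ y in E i, gg y ∂μ| := by
            rw [hcfdef, abs_mul, abs_of_nonneg (inv_nonneg.2 ENNReal.toReal_nonneg)]
        _ ≤ (μ (E i)).toReal⁻¹ * ((μ (E i)).toReal * M) :=
            mul_le_mul_of_nonneg_left h1 (inv_nonneg.2 ENNReal.toReal_nonneg)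
        _ = M := by field_simp
  -- grid approximation of the coefficients
  have hgrid : ∀ i, ∃ k : ℤ, k ∈ Finset.Icc (-(N : ℤ)) (N : ℤ) ∧ |cf i - (k : ℝ) * η| ≤ η := by
    intro i
    obtain ⟨hlo, hhi⟩ := abs_le.1 (hcfM i)
    refine ⟨⌊cf i / η⌋, Finset.mem_Icc.2 ⟨?_, ?_⟩, ?_⟩
    · refine Int.le_floor.2 ?_
      rw [le_div_iff₀ hη0]
      push_cast
      linarith
    · have h2 : cf i / η ≤ ((N : ℤ) : ℝ) := by
        rw [div_le_iff₀ hη0]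
        push_cast
        linarith
      have := Int.floor_mono h2
      rwa [Int.floor_intCast] at this
    · have h1 : (⌊cf i / η⌋ : ℝ) * η ≤ cf i := by
        rw [← le_div_iff₀ hη0]
        exact Int.floor_le _
      have h2 : cf i < ((⌊cf i / η⌋ : ℝ) + 1) * η := by
        rw [← div_lt_iff₀ hη0]
        exact Int.lt_floor_add_one _
      rw [abs_le]
      constructor <;> nlinarith
  choose kv hkv hkvclose using hgrid
  set v : Fin n → ℝ := fun i => (kv i : ℝ) * η with hvdef
  set gv : X → ℝ := fun x => ∑ i, Set.indicator (E i) (fun _ => v i) x with hgvdef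
  have hgvG : gv ∈ G := by
    refine Finset.mem_image.2 ⟨v, ?_, rfl⟩
    exact Fintype.mem_piFinset.2 fun i => Finset.mem_image_of_mem _ (hkv i)
  set Pg : X → ℝ := fun x => ∑ i, Set.indicator (E i) (fun _ => cf i) x with hPgdef
  have hPgmeas : Measurable Pg :=
    Finset.measurable_sum _ fun i _ => Measurable.indicator measurable_const (hEmeas i)
  have hgvmeas : Measurable gv :=
    Finset.measurable_sum _ fun i _ => Measurable.indicator measurable_const (hEmeas i)
  -- Estimate A : rounding error
  have hA : eLpNorm (fun x => Pg x - gv x) 1 μ ≤ ENNReal.ofReal (e / 2) := by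
    have hPgv : ∀ x, ‖Pg x - gv x‖ ≤ η := by
      intro x
      obtain ⟨i, hxi⟩ := hEmem x
      have h1 : Pg x = cf i := sum_indicator_eq hEdisj cf hxi
      have h2 : gv x = v i := sum_indicator_eq hEdisj v hxi
      rw [Real.norm_eq_abs, h1, h2]
      exact hkvclose i
    refine (eLpNorm_le_of_ae_bound (Filter.Eventually.of_forall hPgv)).trans ?_
    simp only [ENNReal.toReal_one, inv_one, ENNReal.rpow_one]
    rw [← ENNReal.ofReal_toReal hμfin.ne, ← ENNReal.ofReal_mul hμb0]
    apply ENNReal.ofReal_le_ofReal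
    have hq : μb / (μb + 1) ≤ 1 := (div_le_one (by positivity)).2 (by linarith)
    have hqe : μb * η = (e / 2) * (μb / (μb + 1)) := by
      rw [hηdef]; ring
    nlinarith
  -- Estimate B : main term
  set f' := hfmem.1.mk f with hf'def
  have hf'meas : Measurable f' := hfmem.1.stronglyMeasurable_mk.measurable
  have hff' : f =ᵐ[μ] f' := hfmem.1.ae_eq_mk
  obtain ⟨hΦmeas, hΦint⟩ := tonelli_est μ (fun x => (hann x).le) hf'meas
  set Φ : X → ℝ≥0∞ :=
    fun x => ∫⁻ y in closedBall x (r + δ) \ closedBall x (r - δ), (‖f' y‖₊ : ℝ≥0∞) ∂μ with hΦdef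
  have hΦeq : ∀ x, ENNReal.ofReal
      (∫ y in closedBall x (r + δ) \ closedBall x (r - δ), |f y| ∂μ) = Φ x := by
    intro x
    have h1 : ∫ y in closedBall x (r + δ) \ closedBall x (r - δ), |f y| ∂μ
        = ∫ y in closedBall x (r + δ) \ closedBall x (r - δ), ‖f y‖ ∂μ := by
      simp only [Real.norm_eq_abs]
    rw [h1, ofReal_integral_norm_eq_lintegral_enorm hfint.integrableOn]
    refine lintegral_congr_ae ((ae_restrict_of_ae hff').mono fun y hy => ?_)
    simp only [hy]; rfl
  set KE := cb⁻¹ * cb⁻¹ * eb * Cb with hKEdef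
  have hKE0 : 0 ≤ KE := by positivity
  have hae : ∀ᵐ x ∂μ, (‖gg x - Pg x‖₊ : ℝ≥0∞) ≤
      ENNReal.ofReal cb⁻¹ * Φ x + ENNReal.ofReal KE := by
    have hnull : μ (⋃ i : Fin n, ⋃ _ : μ (E i) = 0, E i) = 0 :=
      measure_iUnion_null fun i => measure_iUnion_null fun h => h
    filter_upwards [measure_eq_zero_iff_ae_notMem.1 hnull] with x hx
    obtain ⟨i, hxi⟩ := hEmem x
    have hEi0 : μ (E i) ≠ 0 := by
      intro h0
      exact hx (mem_iUnion.2 ⟨i, mem_iUnion.2 ⟨h0, hxi⟩⟩)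
    have hb : ∀ x' ∈ E i, |gg x - gg x'| ≤
        cb⁻¹ * (∫ y in closedBall x (r + δ) \ closedBall x (r - δ), |f y| ∂μ) + KE := by
      intro x' hx'
      exact core_est μ hδ0 hδr (fun z t ht => (hball z t ht).2) hcb0 hcble hfint hfabs hannR
        x x' (hEdiam i x hxi x' hx')
    have hpiece := piece_est μ (hEmeas i) (hEfin i) hEi0 hgint hxi hb
    have hPgx : Pg x = cf i := sum_indicator_eq hEdisj cf hxi
    have hcoe : (‖gg x - Pg x‖₊ : ℝ≥0∞) = ENNReal.ofReal |gg x - cf i| := by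
      rw [hPgx]; exact Real.enorm_eq_ofReal_abs _
    rw [hcoe]
    calc ENNReal.ofReal |gg x - cf i|
        ≤ ENNReal.ofReal (cb⁻¹ *
            (∫ y in closedBall x (r + δ) \ closedBall x (r - δ), |f y| ∂μ) + KE) :=
          ENNReal.ofReal_le_ofReal hpiece
      _ ≤ ENNReal.ofReal (cb⁻¹ *
            (∫ y in closedBall x (r + δ) \ closedBall x (r - δ), |f y| ∂μ))
            + ENNReal.ofReal KE := ENNReal.ofReal_add_le
      _ = ENNReal.ofReal cb⁻¹ * ENNReal.ofReal
            (∫ y in closedBall x (r + δ) \ closedBall x (r - δ), |f y| ∂μ)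
            + ENNReal.ofReal KE := by
          rw [ENNReal.ofReal_mul (inv_nonneg.2 hcb0.le)]
      _ = ENNReal.ofReal cb⁻¹ * Φ x + ENNReal.ofReal KE := by rw [hΦeq x]
  have hf'lint : ∫⁻ y, (‖f' y‖₊ : ℝ≥0∞) ∂μ ≤ (C : ℝ≥0∞) := by
    refine le_trans (le_of_eq (lintegral_congr_ae (hff'.mono fun y hy => ?_)).symm) hlint
    rw [hy]
  have hB : eLpNorm (fun x => gg x - Pg x) 1 μ ≤ ENNReal.ofReal (e / 2) := by
    rw [eLpNorm_one_eq_lintegral_enorm]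
    have hCcoe : (C : ℝ≥0∞) ≤ ENNReal.ofReal Cb := by
      rw [← ENNReal.ofReal_coe_nnreal]
      exact ENNReal.ofReal_le_ofReal (le_max_left _ _)
    calc ∫⁻ x, (‖gg x - Pg x‖₊ : ℝ≥0∞) ∂μ
        ≤ ∫⁻ x, (ENNReal.ofReal cb⁻¹ * Φ x + ENNReal.ofReal KE) ∂μ := lintegral_mono_ae hae
      _ = ENNReal.ofReal cb⁻¹ * ∫⁻ x, Φ x ∂μ + ENNReal.ofReal KE * μ Set.univ := by
          rw [lintegral_add_right _ measurable_const, lintegral_const,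
            lintegral_const_mul _ hΦmeas]
      _ ≤ ENNReal.ofReal cb⁻¹ * (ENNReal.ofReal eb * ENNReal.ofReal Cb)
            + ENNReal.ofReal KE * ENNReal.ofReal μb := by
          refine add_le_add (mul_le_mul_right (hΦint.trans ?_) _) ?_
          · exact mul_le_mul_right (hf'lint.trans hCcoe) _
          · rw [← ENNReal.ofReal_toReal hμfin.ne]
      _ = ENNReal.ofReal (cb⁻¹ * (eb * Cb) + KE * μb) := by
          rw [← ENNReal.ofReal_mul heb0.le,
            ← ENNReal.ofReal_mul (inv_nonneg.2 hcb0.le),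
            ← ENNReal.ofReal_mul hKE0,
            ← ENNReal.ofReal_add (mul_nonneg (inv_nonneg.2 hcb0.le)
              (mul_nonneg heb0.le hCb0.le)) (mul_nonneg hKE0 hμb0)]
      _ ≤ ENNReal.ofReal (e / 2) := by
          apply ENNReal.ofReal_le_ofReal
          have harith : cb⁻¹ * (eb * Cb) + KE * μb = eb * (D - 1) := by
            rw [hKEdef, hDdef]; ring
          rw [harith]
          have h2 : eb * D = e / 2 := by
            rw [hebdef]; field_simp
          nlinarith
  -- combine
  refine ⟨gv, hgvG, ?_⟩
  have hsplit : (fun x => gg x - gv x)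
      = (fun x => gg x - Pg x) + fun x => Pg x - gv x := by
    funext x
    simp only [Pi.add_apply]
    ring
  calc eLpNorm (fun x => gg x - gv x) 1 μ
      = eLpNorm ((fun x => gg x - Pg x) + fun x => Pg x - gv x) 1 μ := by rw [hsplit]
    _ ≤ eLpNorm (fun x => gg x - Pg x) 1 μ + eLpNorm (fun x => Pg x - gv x) 1 μ :=
        eLpNorm_add_le (hgmem.1.sub hPgmeas.aestronglyMeasurable)
          (hPgmeas.aestronglyMeasurable.sub hgvmeas.aestronglyMeasurable) le_rfl
    _ ≤ ENNReal.ofReal (e / 2) + ENNReal.ofReal (e / 2) := add_le_add hB hA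
    _ = ENNReal.ofReal e := by
        rw [← ENNReal.ofReal_add (by linarith) (by linarith)]
        norm_num
end

section
/- Let X have the s-doubling property and property (⋆)_s for every s > 0, and let p ∈ [1, ∞). Let F ⊂ L^p(X) be a bounded subset such that: (1) for every ε > 0 there is δ > 0 with ‖A_δ f − f‖_p < ε for all f ∈ F; (2) for every ε > 0 there is a bounded set E ⊂ X with ‖f χ_{X\E}‖_p < ε for all f ∈ F. Then F is relatively compact in L^p(X). -/
open MeasureTheory Metric Set ENNReal NNReal

set_option linter.unusedSectionVars false
set_option linter.unusedVariables false
set_option maxHeartbeats 1600000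

section Aux

variable {X : Type*} [MetricSpace X] [MeasurableSpace X] {μ : Measure X} [BorelSpace X]
  {p : ℝ≥0∞}

lemma aux_integrableOn {f : X → ℝ} (hf : MemLp f p μ) (hp1 : 1 ≤ p) {S : Set X}
    (hS : μ S ≠ ⊤) : IntegrableOn f S μ := by
  haveI : Fact (μ S < ⊤) := ⟨lt_top_iff_ne_top.2 hS⟩
  exact (hf.restrict S).integrable hp1

lemma aux_holder {f : X → ℝ} (hf : AEStronglyMeasurable f μ) (hp1 : 1 ≤ p) {S : Set X}
    (hS : MeasurableSet S) :
    ∫⁻ x in S, ‖f x‖₊ ∂μ ≤ eLpNorm (S.indicator f) p μ * μ S ^ (1 - 1 / p.toReal) := by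
  have h := eLpNorm_le_eLpNorm_mul_rpow_measure_univ (μ := μ.restrict S) (p := 1) (q := p)
    hp1 hf.restrict
  rw [eLpNorm_one_eq_lintegral_enorm, ← eLpNorm_indicator_eq_eLpNorm_restrict hS] at h
  simpa [Measure.restrict_apply_univ, ← enorm_eq_nnnorm] using h

lemma aux_setint_le {f : X → ℝ} {S : Set X} {b : ℝ≥0∞}
    (hf : AEStronglyMeasurable f μ)
    (hb : ∫⁻ x in S, ‖f x‖₊ ∂μ ≤ b) (hbt : b ≠ ⊤) :
    ∫ x in S, ‖f x‖ ∂μ ≤ b.toReal := by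
  rw [integral_norm_eq_lintegral_enorm hf.restrict]
  exact ENNReal.toReal_mono hbt hb

lemma aux_exp_nonneg (hp1 : 1 ≤ p) (hp2 : p ≠ ⊤) : 0 ≤ 1 - 1 / p.toReal := by
  have hpt : 1 ≤ p.toReal := by
    rw [← ENNReal.toReal_one]
    exact ENNReal.toReal_mono hp2 hp1
  have : 1 / p.toReal ≤ 1 := by
    rw [div_le_one (by linarith)]; linarith
  linarith

lemma aux_small_int {f : X → ℝ} (hf : AEStronglyMeasurable f μ) (hp1 : 1 ≤ p) (hp2 : p ≠ ⊤)
    {S : Set X} (hS : MeasurableSet S) (hS1 : μ S ≤ 1) {b : ℝ≥0∞}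
    (hb : eLpNorm (S.indicator f) p μ ≤ b) (hbt : b ≠ ⊤) :
    ∫ z in S, ‖f z‖ ∂μ ≤ b.toReal := by
  refine aux_setint_le hf ((aux_holder hf hp1 hS).trans ?_) hbt
  calc eLpNorm (S.indicator f) p μ * μ S ^ (1 - 1 / p.toReal) ≤ b * 1 := by
        gcongr
        exact ENNReal.rpow_le_one hS1 (aux_exp_nonneg hp1 hp2)
    _ = b := mul_one b

lemma aux_doub_pow
    (hdoub : ∀ s : ℝ, 0 < s → ∃ γ : ℝ, 1 ≤ γ ∧
      ∀ x : X, μ (closedBall x (2 * s)) ≤ ENNReal.ofReal γ * μ (closedBall x s))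
    {t : ℝ} (ht : 0 < t) (k : ℕ) :
    ∃ c : ℝ≥0∞, c ≠ 0 ∧ c ≠ ⊤ ∧ ∀ x : X, μ (closedBall x (2 ^ k * t)) ≤ c * μ (closedBall x t) := by
  induction k with
  | zero => exact ⟨1, one_ne_zero, one_ne_top, fun x => by simp⟩
  | succ k ih =>
    obtain ⟨c, hc0, hct, hc⟩ := ih
    obtain ⟨γ, hγ1, hγ⟩ := hdoub (2 ^ k * t) (by positivity)
    refine ⟨ENNReal.ofReal γ * c, ?_, ?_, fun x => ?_⟩
    · exact mul_ne_zero (by simp [ENNReal.ofReal_eq_zero]; linarith) hc0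
    · exact ENNReal.mul_ne_top ofReal_ne_top hct
    · have h2 : (2 : ℝ) ^ (k + 1) * t = 2 * (2 ^ k * t) := by ring
      rw [h2]
      calc μ (closedBall x (2 * (2 ^ k * t))) ≤ ENNReal.ofReal γ * μ (closedBall x (2 ^ k * t)) :=
            hγ x
        _ ≤ ENNReal.ofReal γ * (c * μ (closedBall x t)) := by gcongr; exact hc x
        _ = ENNReal.ofReal γ * c * μ (closedBall x t) := by ring

lemma aux_ball_lower
    (hball : ∀ (x : X) (t : ℝ), 0 < t → 0 < μ (closedBall x t) ∧ μ (closedBall x t) < ⊤)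
    (hdoub : ∀ s : ℝ, 0 < s → ∃ γ : ℝ, 1 ≤ γ ∧
      ∀ x : X, μ (closedBall x (2 * s)) ≤ ENNReal.ofReal γ * μ (closedBall x s))
    (x0 : X) {R t : ℝ} (hR : 0 < R) (ht : 0 < t) :
    ∃ m : ℝ, 0 < m ∧ ∀ z ∈ closedBall x0 R, ENNReal.ofReal m ≤ μ (closedBall z t) := by
  obtain ⟨k, hk⟩ := pow_unbounded_of_one_lt ((R + t) / t) (one_lt_two (α := ℝ))
  have hk' : R + t ≤ 2 ^ k * t := by
    rw [div_lt_iff₀ ht] at hk; linarith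
  obtain ⟨c, hc0, hct, hc⟩ := aux_doub_pow hdoub ht k
  set m' : ℝ≥0∞ := μ (closedBall x0 t) / c with hm'
  have hm'0 : 0 < m' := ENNReal.div_pos (hball x0 t ht).1.ne' hct
  have hm't : m' ≠ ⊤ := (ENNReal.div_lt_top (hball x0 t ht).2.ne hc0).ne
  refine ⟨m'.toReal, ENNReal.toReal_pos hm'0.ne' hm't, fun z hz => ?_⟩
  rw [ENNReal.ofReal_toReal hm't]
  have hsub : closedBall x0 t ⊆ closedBall z (2 ^ k * t) := fun w hw => by
    rw [mem_closedBall] at *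
    calc dist w z ≤ dist w x0 + dist x0 z := dist_triangle _ _ _
      _ ≤ t + R := add_le_add hw (by rwa [dist_comm, ← mem_closedBall])
      _ ≤ 2 ^ k * t := by linarith
  have : μ (closedBall x0 t) ≤ c * μ (closedBall z t) :=
    (measure_mono hsub).trans (hc z)
  rw [hm']
  exact ENNReal.div_le_of_le_mul' this

lemma aux_subset1 {x y : X} {δ r : ℝ} (hxy : dist y x ≤ r) :
    closedBall x (δ - r) ⊆ closedBall y δ := fun z hz => by
  rw [mem_closedBall] at *
  calc dist z y ≤ dist z x + dist x y := dist_triangle _ _ _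
    _ ≤ (δ - r) + r := add_le_add hz (by rwa [dist_comm])
    _ = δ := by ring

lemma aux_subset2 {x y : X} {δ r : ℝ} (hxy : dist y x ≤ r) :
    closedBall y δ ⊆ closedBall x (δ + r) := fun z hz => by
  rw [mem_closedBall] at *
  calc dist z x ≤ dist z y + dist y x := dist_triangle _ _ _
    _ ≤ δ + r := add_le_add hz hxy

lemma aux_diff_subset1 {x y : X} {δ r : ℝ} (hr : 0 < r) (hxy : dist y x ≤ r) :
    closedBall y δ \ closedBall x δ ⊆ closedBall x (δ + r) \ closedBall x (δ - r) := by
  intro z hz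
  refine ⟨aux_subset2 hxy hz.1, fun hz' => hz.2 ?_⟩
  exact closedBall_subset_closedBall (by linarith) hz'

lemma aux_diff_subset2 {x y : X} {δ r : ℝ} (hr : 0 < r) (hxy : dist y x ≤ r) :
    closedBall x δ \ closedBall y δ ⊆ closedBall x (δ + r) \ closedBall x (δ - r) := by
  intro z hz
  refine ⟨closedBall_subset_closedBall (by linarith) hz.1, fun hz' => hz.2 ?_⟩
  exact aux_subset1 hxy hz'

lemma aux_D_close
    (hball : ∀ (x : X) (t : ℝ), 0 < t → 0 < μ (closedBall x t) ∧ μ (closedBall x t) < ⊤)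
    {x y : X} {δ r : ℝ} (hr : 0 < r) (hrδ : r < δ) (hxy : dist y x ≤ r) :
    |(μ (closedBall y δ)).toReal - (μ (closedBall x δ)).toReal| ≤
      (μ (closedBall x (δ + r) \ closedBall x (δ - r))).toReal := by
  have hU : μ (closedBall x (δ + r)) < ⊤ := (hball x (δ + r) (by linarith)).2
  have hL : μ (closedBall x (δ - r)) ≠ ⊤ :=
    ((measure_mono (closedBall_subset_closedBall (by linarith))).trans_lt hU).ne
  have hdiff : μ (closedBall x (δ + r) \ closedBall x (δ - r)) =
      μ (closedBall x (δ + r)) - μ (closedBall x (δ - r)) :=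
    measure_diff (closedBall_subset_closedBall (by linarith))
      measurableSet_closedBall.nullMeasurableSet hL
  have hsub : μ (closedBall x (δ - r)) ≤ μ (closedBall x (δ + r)) :=
    measure_mono (closedBall_subset_closedBall (by linarith))
  rw [hdiff, ENNReal.toReal_sub_of_le hsub hU.ne]
  have h1 : (μ (closedBall x (δ - r))).toReal ≤ (μ (closedBall y δ)).toReal :=
    ENNReal.toReal_mono ((measure_mono (aux_subset2 hxy)).trans_lt hU).ne
      (measure_mono (aux_subset1 hxy))
  have h2 : (μ (closedBall y δ)).toReal ≤ (μ (closedBall x (δ + r))).toReal :=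
    ENNReal.toReal_mono hU.ne (measure_mono (aux_subset2 hxy))
  have h3 : (μ (closedBall x (δ - r))).toReal ≤ (μ (closedBall x δ)).toReal :=
    ENNReal.toReal_mono ((measure_mono (closedBall_subset_closedBall (by linarith))).trans_lt hU).ne
      (measure_mono (closedBall_subset_closedBall (by linarith)))
  have h4 : (μ (closedBall x δ)).toReal ≤ (μ (closedBall x (δ + r))).toReal :=
    ENNReal.toReal_mono hU.ne (measure_mono (closedBall_subset_closedBall (by linarith)))
  rw [abs_le]
  constructor <;> linarith

lemma aux_N_close {f : X → ℝ} {x y : X} {δ r : ℝ} (hr : 0 < r) (hrδ : r < δ)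
    (hxy : dist y x ≤ r) (hf : IntegrableOn f (closedBall x (δ + r)) μ) :
    |(∫ z in closedBall y δ, f z ∂μ) - ∫ z in closedBall x δ, f z ∂μ| ≤
      2 * ∫ z in closedBall x (δ + r) \ closedBall x (δ - r), ‖f z‖ ∂μ := by
  set A := closedBall x (δ + r) \ closedBall x (δ - r) with hA
  have hyA : closedBall y δ ⊆ closedBall x (δ + r) := aux_subset2 hxy
  have hxA : closedBall x δ ⊆ closedBall x (δ + r) := closedBall_subset_closedBall (by linarith)
  have hnormA : IntegrableOn (fun z => ‖f z‖) A μ :=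
    IntegrableOn.mono_set
      (show IntegrableOn (fun z => ‖f z‖) (closedBall x (δ + r)) μ from hf.norm) diff_subset
  have h0 : 0 ≤ᵐ[μ.restrict A] fun z => ‖f z‖ :=
    Filter.Eventually.of_forall fun z => norm_nonneg _
  have e1 : (∫ z in closedBall y δ ∩ closedBall x δ, f z ∂μ) +
      (∫ z in closedBall y δ \ closedBall x δ, f z ∂μ) = ∫ z in closedBall y δ, f z ∂μ :=
    integral_inter_add_diff measurableSet_closedBall (hf.mono_set hyA)
  have e2 : (∫ z in closedBall x δ ∩ closedBall y δ, f z ∂μ) +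
      (∫ z in closedBall x δ \ closedBall y δ, f z ∂μ) = ∫ z in closedBall x δ, f z ∂μ :=
    integral_inter_add_diff measurableSet_closedBall (hf.mono_set hxA)
  rw [inter_comm] at e2
  have key : (∫ z in closedBall y δ, f z ∂μ) - (∫ z in closedBall x δ, f z ∂μ) =
      (∫ z in closedBall y δ \ closedBall x δ, f z ∂μ) -
      (∫ z in closedBall x δ \ closedBall y δ, f z ∂μ) := by
    rw [← e1, ← e2]; ring
  have b1 : |∫ z in closedBall y δ \ closedBall x δ, f z ∂μ| ≤ ∫ z in A, ‖f z‖ ∂μ := by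
    refine (norm_integral_le_integral_norm f).trans ?_
    exact setIntegral_mono_set hnormA h0
      (HasSubset.Subset.eventuallyLE (aux_diff_subset1 hr hxy))
  have b2 : |∫ z in closedBall x δ \ closedBall y δ, f z ∂μ| ≤ ∫ z in A, ‖f z‖ ∂μ := by
    refine (norm_integral_le_integral_norm f).trans ?_
    exact setIntegral_mono_set hnormA h0
      (HasSubset.Subset.eventuallyLE (aux_diff_subset2 hr hxy))
  calc |(∫ z in closedBall y δ, f z ∂μ) - ∫ z in closedBall x δ, f z ∂μ|
      ≤ |∫ z in closedBall y δ \ closedBall x δ, f z ∂μ| +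
        |∫ z in closedBall x δ \ closedBall y δ, f z ∂μ| := by rw [key]; exact abs_sub _ _
    _ ≤ 2 * ∫ z in A, ‖f z‖ ∂μ := by linarith

lemma aux_alg {Dx Dy Nx Ny mlow K Jv a : ℝ} (hm : 0 < mlow)
    (hDx : mlow ≤ Dx) (hDy : mlow ≤ Dy) (hK : |Ny| ≤ K)
    (hN : |Nx - Ny| ≤ 2 * Jv) (hD : |Dx - Dy| ≤ a) (ha : 0 ≤ a) :
    |Dx⁻¹ * Nx - Dy⁻¹ * Ny| ≤ (2 * Jv) / mlow + (a * K) / (mlow * mlow) := by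
  have hDx0 : 0 < Dx := lt_of_lt_of_le hm hDx
  have hDy0 : 0 < Dy := lt_of_lt_of_le hm hDy
  have hK0 : 0 ≤ K := le_trans (abs_nonneg _) hK
  have e1 : Dx⁻¹ * Nx - Dy⁻¹ * Ny = Dx⁻¹ * (Nx - Ny) + (Dy - Dx) / (Dx * Dy) * Ny := by
    field_simp
    ring
  rw [e1]
  have t1 : |Dx⁻¹ * (Nx - Ny)| ≤ (2 * Jv) / mlow := by
    rw [abs_mul, abs_inv, abs_of_pos hDx0, div_eq_inv_mul]
    exact mul_le_mul (by rw [inv_le_inv₀ hDx0 hm]; exact hDx) hN (abs_nonneg _)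
      (inv_nonneg.2 hm.le)
  have t2 : |(Dy - Dx) / (Dx * Dy) * Ny| ≤ (a * K) / (mlow * mlow) := by
    rw [abs_mul, abs_div, abs_of_pos (mul_pos hDx0 hDy0), div_mul_eq_mul_div]
    apply div_le_div₀ (by positivity) ?_ (by positivity) ?_
    · exact mul_le_mul (by rw [abs_sub_comm]; exact hD) hK (abs_nonneg _) ha
    · exact mul_le_mul hDx hDy hm.le hDx0.le
  calc |Dx⁻¹ * (Nx - Ny) + (Dy - Dx) / (Dx * Dy) * Ny| ≤
      |Dx⁻¹ * (Nx - Ny)| + |(Dy - Dx) / (Dx * Dy) * Ny| := abs_add_le _ _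
    _ ≤ (2 * Jv) / mlow + (a * K) / (mlow * mlow) := add_le_add t1 t2

lemma aux_net
    (hball : ∀ (x : X) (t : ℝ), 0 < t → 0 < μ (closedBall x t) ∧ μ (closedBall x t) < ⊤)
    (hdoub : ∀ s : ℝ, 0 < s → ∃ γ : ℝ, 1 ≤ γ ∧
      ∀ x : X, μ (closedBall x (2 * s)) ≤ ENNReal.ofReal γ * μ (closedBall x s))
    (x0 : X) {R r : ℝ} (hR : 0 < R) (hr : 0 < r) :
    ∃ (n : ℕ) (t : Fin n → X), (∀ i, t i ∈ closedBall x0 R) ∧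
      closedBall x0 R ⊆ ⋃ i, closedBall (t i) r := by
  classical
  set E := closedBall x0 R with hE
  obtain ⟨m, hm0, hm⟩ := aux_ball_lower hball hdoub x0 hR (half_pos hr)
  set V : ℝ≥0∞ := μ (closedBall x0 (R + r)) with hV
  have hVt : V ≠ ⊤ := (hball x0 (R + r) (by linarith)).2.ne
  have hmne : ENNReal.ofReal m ≠ 0 := by simp [ENNReal.ofReal_eq_zero]; linarith
  set 𝒮 : Set (Finset X) := {T | ↑T ⊆ E ∧ ∀ a ∈ T, ∀ b ∈ T, a ≠ b → r < dist a b} with h𝒮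
  have hcard : ∀ T ∈ 𝒮, (T.card : ℝ≥0∞) * ENNReal.ofReal m ≤ V := by
    intro T hT
    have hdisj : (↑T : Set X).PairwiseDisjoint fun a => closedBall a (r / 2) := by
      intro a ha b hb hab
      refine Set.disjoint_left.2 fun z hza hzb => ?_
      simp only [mem_closedBall] at hza hzb
      have : dist a b ≤ r := by
        calc dist a b ≤ dist a z + dist z b := dist_triangle _ _ _
          _ ≤ r / 2 + r / 2 := add_le_add (by rwa [dist_comm]) hzb
          _ = r := by ring
      exact absurd this (not_le.2 (hT.2 a ha b hb hab))
    have hunion : μ (⋃ a ∈ T, closedBall a (r / 2)) = ∑ a ∈ T, μ (closedBall a (r / 2)) :=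
      measure_biUnion_finset hdisj fun a _ => measurableSet_closedBall
    have hsub : (⋃ a ∈ T, closedBall a (r / 2)) ⊆ closedBall x0 (R + r) := by
      refine iUnion₂_subset fun a ha => fun z hz => ?_
      rw [mem_closedBall] at *
      have haE : a ∈ E := hT.1 ha
      calc dist z x0 ≤ dist z a + dist a x0 := dist_triangle _ _ _
        _ ≤ r / 2 + R := add_le_add hz haE
        _ ≤ R + r := by linarith
    calc (T.card : ℝ≥0∞) * ENNReal.ofReal m = ∑ _a ∈ T, ENNReal.ofReal m := by
          rw [Finset.sum_const, nsmul_eq_mul]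
      _ ≤ ∑ a ∈ T, μ (closedBall a (r / 2)) :=
          Finset.sum_le_sum fun a ha => hm a (hT.1 ha)
      _ = μ (⋃ a ∈ T, closedBall a (r / 2)) := hunion.symm
      _ ≤ V := measure_mono hsub
  have hcardN : ∀ T ∈ 𝒮, T.card ≤ ⌈(V / ENNReal.ofReal m).toReal⌉₊ := by
    intro T hT
    have h1 : (T.card : ℝ≥0∞) ≤ V / ENNReal.ofReal m :=
      (ENNReal.le_div_iff_mul_le (Or.inl hmne) (Or.inl ofReal_ne_top)).2 (hcard T hT)
    have h2 : V / ENNReal.ofReal m ≠ ⊤ := (ENNReal.div_lt_top hVt hmne).ne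
    have h3 : (T.card : ℝ) ≤ (V / ENNReal.ofReal m).toReal := by
      have := ENNReal.toReal_mono h2 h1
      simpa using this
    exact_mod_cast h3.trans (Nat.le_ceil _)
  set A : Set ℕ := {k | ∃ T ∈ 𝒮, T.card = k} with hA
  have hAne : A.Nonempty := ⟨0, ∅, ⟨by simp [h𝒮], by simp⟩, rfl⟩
  have hAbdd : BddAbove A := by
    refine ⟨⌈(V / ENNReal.ofReal m).toReal⌉₊, fun k hk => ?_⟩
    obtain ⟨T, hT, rfl⟩ := hk
    exact hcardN T hT
  obtain ⟨T, hT, hTcard⟩ := Nat.sSup_mem hAne hAbdd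
  have hmax : ∀ x ∈ E, ∃ a ∈ T, dist x a ≤ r := by
    intro x hx
    by_contra h
    push_neg at h
    have hxT : x ∉ T := fun hxT => by have := h x hxT; simp at this; linarith
    have hins : insert x T ∈ 𝒮 := by
      constructor
      · intro z hz
        rcases Finset.mem_insert.1 hz with rfl | hz
        · exact hx
        · exact hT.1 hz
      · intro a ha b hb hab
        rcases Finset.mem_insert.1 ha with rfl | haT
        · rcases Finset.mem_insert.1 hb with rfl | hbT
          · exact absurd rfl hab
          · exact h b hbT
        · rcases Finset.mem_insert.1 hb with rfl | hbT
          · rw [dist_comm]; exact h a haT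
          · exact hT.2 a haT b hbT hab
    have : (insert x T).card ∈ A := ⟨insert x T, hins, rfl⟩
    have hle := le_csSup hAbdd this
    rw [Finset.card_insert_of_notMem hxT, hTcard] at hle
    omega
  refine ⟨T.card, fun i => (T.equivFin.symm i : X), fun i => hT.1 (T.equivFin.symm i).2, ?_⟩
  intro x hx
  obtain ⟨a, haT, hdist⟩ := hmax x hx
  refine mem_iUnion.2 ⟨T.equivFin ⟨a, haT⟩, ?_⟩
  rw [mem_closedBall]
  simpa using hdist

lemma aux_avg_continuous
    (hball : ∀ (x : X) (t : ℝ), 0 < t → 0 < μ (closedBall x t) ∧ μ (closedBall x t) < ⊤)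
    (hstar : ∀ s : ℝ, 0 < s → ∀ ε : ℝ≥0∞, 0 < ε → ∃ δ : ℝ, 0 < δ ∧ δ < s ∧
      ∀ x : X, μ (closedBall x (s + δ) \ closedBall x (s - δ)) < ε)
    {f : X → ℝ} (hp1 : 1 ≤ p) (hp2 : p ≠ ⊤)
    (hf : MemLp f p μ) {δ : ℝ} (hδ : 0 < δ) :
    Continuous (avgOp μ δ f) := by
  have hD : Continuous fun x : X => (μ (closedBall x δ)).toReal := by
    rw [Metric.continuous_iff]
    intro x ε hε
    obtain ⟨r, hr0, hrδ, hann⟩ := hstar δ hδ (ENNReal.ofReal ε) (by simpa using hε)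
    refine ⟨r, hr0, fun y hy => ?_⟩
    rw [Real.dist_eq]
    have h1 := aux_D_close hball hr0 hrδ (le_of_lt hy)
    have h2 : (μ (closedBall x (δ + r) \ closedBall x (δ - r))).toReal < ε := by
      have hfin : μ (closedBall x (δ + r) \ closedBall x (δ - r)) ≠ ⊤ :=
        ((measure_mono diff_subset).trans_lt (hball x (δ + r) (by linarith)).2).ne
      exact (ENNReal.lt_ofReal_iff_toReal_lt hfin).1 (hann x)
    linarith [h1.trans_lt h2]
  have hN : Continuous fun x : X => ∫ z in closedBall x δ, f z ∂μ := by
    rw [Metric.continuous_iff]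
    intro x ε hε
    obtain ⟨η, hη0, hη⟩ := hf.eLpNorm_indicator_le hp1 hp2 (show (0:ℝ) < ε/4 by linarith)
    obtain ⟨r, hr0, hrδ, hann⟩ := hstar δ hδ (min (ENNReal.ofReal η) 1)
      (lt_min (by simpa using hη0) zero_lt_one)
    refine ⟨r, hr0, fun y hy => ?_⟩
    rw [Real.dist_eq]
    set A := closedBall x (δ + r) \ closedBall x (δ - r) with hA
    have hAm : MeasurableSet A := measurableSet_closedBall.diff measurableSet_closedBall
    have hint : IntegrableOn f (closedBall x (δ + r)) μ :=
      aux_integrableOn hf hp1 (hball x (δ + r) (by linarith)).2.ne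
    have h1 := aux_N_close hr0 hrδ (le_of_lt hy) hint
    have hAsmall : μ A ≤ ENNReal.ofReal η := ((hann x).le.trans (min_le_left _ _))
    have hA1 : μ A ≤ 1 := ((hann x).le.trans (min_le_right _ _))
    have h2 : ∫ z in A, ‖f z‖ ∂μ ≤ ε / 4 := by
      have := aux_small_int hf.aestronglyMeasurable hp1 hp2 hAm hA1
        (hη A hAm hAsmall) ofReal_ne_top
      rwa [ENNReal.toReal_ofReal (by linarith)] at this
    have h3 : |(∫ z in closedBall y δ, f z ∂μ) - ∫ z in closedBall x δ, f z ∂μ| ≤ ε / 2 := by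
      calc |(∫ z in closedBall y δ, f z ∂μ) - ∫ z in closedBall x δ, f z ∂μ| ≤
          2 * ∫ z in A, ‖f z‖ ∂μ := h1
        _ ≤ 2 * (ε / 4) := by linarith
        _ = ε / 2 := by ring
    linarith [h3]
  have hD0 : ∀ x : X, (μ (closedBall x δ)).toReal ≠ 0 := fun x =>
    (ENNReal.toReal_pos (hball x δ hδ).1.ne' (hball x δ hδ).2.ne).ne'
  exact (hD.inv₀ hD0).mul hN

end Aux

theorem stmt16 {X : Type*} [MetricSpace X] [MeasurableSpace X] (μ : Measure X)
    [BorelSpace X]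
    (hball : ∀ (x : X) (t : ℝ), 0 < t → 0 < μ (closedBall x t) ∧ μ (closedBall x t) < ⊤)
    (hdoub : ∀ s : ℝ, 0 < s → ∃ γ : ℝ, 1 ≤ γ ∧
      ∀ x : X, μ (closedBall x (2 * s)) ≤ ENNReal.ofReal γ * μ (closedBall x s))
    (hstar : ∀ s : ℝ, 0 < s → ∀ ε : ℝ≥0∞, 0 < ε → ∃ δ : ℝ, 0 < δ ∧ δ < s ∧
      ∀ x : X, μ (closedBall x (s + δ) \ closedBall x (s - δ)) < ε)
    (p : ℝ≥0∞) (hp1 : 1 ≤ p) (hp2 : p ≠ ⊤)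
    (F : Set (X → ℝ)) (C : ℝ≥0)
    (hF : ∀ f ∈ F, MemLp f p μ ∧ eLpNorm f p μ ≤ C)
    (h1 : ∀ ε : ℝ≥0∞, 0 < ε → ∃ δ : ℝ, 0 < δ ∧
      ∀ f ∈ F, eLpNorm (fun x => avgOp μ δ f x - f x) p μ < ε)
    (h2 : ∀ ε : ℝ≥0∞, 0 < ε → ∃ E : Set X, Bornology.IsBounded E ∧
      ∀ f ∈ F, eLpNorm (Eᶜ.indicator f) p μ < ε) :
    ∀ ε : ℝ≥0∞, 0 < ε → ∃ G : Finset (X → ℝ), ∀ f ∈ F, ∃ g ∈ G,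
      eLpNorm (fun x => f x - g x) p μ ≤ ε := by
  classical
  intro ε hε
  by_cases hεtop : ε = ⊤
  · exact ⟨{fun _ => 0}, fun f hf => ⟨_, Finset.mem_singleton_self _, by simp [hεtop]⟩⟩
  cases isEmpty_or_nonempty X with
  | inl hX =>
    refine ⟨{fun _ => 0}, fun f hf => ⟨_, Finset.mem_singleton_self _, ?_⟩⟩
    have hμ : μ = 0 := by
      ext s hs
      rw [Set.eq_empty_of_isEmpty s]
      exact measure_empty
    simp [hμ]
  | inr hXne =>
    obtain ⟨x0⟩ := hXne
    -- basic exponent facts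
    have hp0 : p ≠ 0 := fun h => by simp [h] at hp1
    have hpt1 : 1 ≤ p.toReal := by
      rw [← ENNReal.toReal_one]; exact ENNReal.toReal_mono hp2 hp1
    have hpt0 : 0 < p.toReal := by linarith
    set pt := p.toReal with hpt
    -- quarters
    set ε2 : ℝ≥0∞ := ε / 2 with hε2
    set ε4 : ℝ≥0∞ := ε2 / 2 with hε4
    have hε20 : 0 < ε2 := ENNReal.div_pos hε.ne' (by norm_num)
    have hε40 : 0 < ε4 := ENNReal.div_pos hε20.ne' (by norm_num)
    -- Step 1 : bounded set E
    obtain ⟨E0, hE0b, hE0⟩ := h2 ε4 hε40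
    obtain ⟨R0, hR0⟩ := hE0b.subset_closedBall x0
    set R : ℝ := max R0 1 with hR
    have hR0' : 0 < R := lt_of_lt_of_le zero_lt_one (le_max_right _ _)
    set E : Set X := closedBall x0 R with hE
    have hEmeas : MeasurableSet E := measurableSet_closedBall
    have hE0E : E0 ⊆ E := hR0.trans (closedBall_subset_closedBall (le_max_left _ _))
    have htail : ∀ f ∈ F, eLpNorm (Eᶜ.indicator f) p μ < ε4 := by
      intro f hf
      refine lt_of_le_of_lt (eLpNorm_mono fun x => ?_) (hE0 f hf)
      by_cases hx : x ∈ Eᶜ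
      · have hx0 : x ∈ E0ᶜ := fun hx0 => hx (hE0E hx0)
        rw [Set.indicator_of_mem hx, Set.indicator_of_mem hx0]
      · rw [Set.indicator_of_notMem hx, norm_zero]
        exact norm_nonneg _
    have hμE : 0 < μ E := (hball x0 R hR0').1
    have hμEt : μ E ≠ ⊤ := (hball x0 R hR0').2.ne
    -- Step 2 : δ from h1
    obtain ⟨δ, hδ0, hδ⟩ := h1 ε4 hε40
    -- lower bound for measures of δ-balls centered in E
    obtain ⟨m, hm0, hm⟩ := aux_ball_lower hball hdoub x0 hR0' hδ0
    have hmE : ∀ z ∈ E, m ≤ (μ (closedBall z δ)).toReal := by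
      intro z hz
      have := hm z hz
      have hfin := (hball z δ hδ0).2.ne
      calc m = (ENNReal.ofReal m).toReal := by rw [ENNReal.toReal_ofReal hm0.le]
        _ ≤ (μ (closedBall z δ)).toReal := ENNReal.toReal_mono hfin this
    -- upper bound K0 for |∫_{B(t,δ)} f| over t ∈ E, f ∈ F
    set V1 : ℝ≥0∞ := μ (closedBall x0 (R + δ)) with hV1
    set K0 : ℝ := ((C : ℝ≥0∞) * V1 ^ (1 - 1 / pt)).toReal + 1 with hK0def
    have hK0pos : 0 < K0 := by
      positivity
    have hintable : ∀ f ∈ F, ∀ (z : X) (t : ℝ), 0 < t → IntegrableOn f (closedBall z t) μ :=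
      fun f hf z t ht => aux_integrableOn (hF f hf).1 hp1 (hball z t ht).2.ne
    have hexp : 0 ≤ 1 - 1 / pt := aux_exp_nonneg hp1 hp2
    have hK0 : ∀ f ∈ F, ∀ t' ∈ E, |∫ z in closedBall t' δ, f z ∂μ| ≤ K0 := by
      intro f hfF t' ht'
      have hsub : closedBall t' δ ⊆ closedBall x0 (R + δ) := by
        have := aux_subset2 (x := x0) (y := t') (δ := δ) (r := R) (mem_closedBall.1 ht')
        rwa [add_comm] at this
      have hlin : ∫⁻ z in closedBall t' δ, ‖f z‖₊ ∂μ ≤ (C : ℝ≥0∞) * V1 ^ (1 - 1 / pt) := by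
        refine (aux_holder (hF f hfF).1.aestronglyMeasurable hp1 measurableSet_closedBall).trans ?_
        refine mul_le_mul' ((eLpNorm_indicator_le f).trans (hF f hfF).2) ?_
        exact ENNReal.rpow_le_rpow (measure_mono hsub) hexp
      have hfin : (C : ℝ≥0∞) * V1 ^ (1 - 1 / pt) ≠ ⊤ :=
        ENNReal.mul_ne_top coe_ne_top
          (ENNReal.rpow_lt_top_of_nonneg hexp (hball x0 (R + δ) (by linarith)).2.ne).ne
      have hle := aux_setint_le (hF f hfF).1.aestronglyMeasurable hlin hfin
      calc |∫ z in closedBall t' δ, f z ∂μ| ≤ ∫ z in closedBall t' δ, ‖f z‖ ∂μ := by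
            rw [← Real.norm_eq_abs]; exact norm_integral_le_integral_norm f
        _ ≤ ((C : ℝ≥0∞) * V1 ^ (1 - 1 / pt)).toReal := hle
        _ ≤ K0 := by rw [hK0def]; linarith
    -- W and the constant ρ'
    set W : ℝ≥0∞ := μ E ^ (1 / pt) with hW
    have hW0 : W ≠ 0 := (ENNReal.rpow_pos hμE hμEt).ne'
    have hWt : W ≠ ⊤ :=
      (ENNReal.rpow_lt_top_of_nonneg (by positivity) hμEt).ne
    set ρ : ℝ≥0∞ := ε2 / W with hρ
    have hρ0 : 0 < ρ := ENNReal.div_pos hε20.ne' hWt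
    set ρ' : ℝ := (min 1 ρ).toReal with hρ'
    have hmin_ne_top : min 1 ρ ≠ ⊤ := ((min_le_left _ _).trans_lt one_lt_top).ne
    have hρ'0 : 0 < ρ' :=
      ENNReal.toReal_pos (lt_min one_pos hρ0).ne' hmin_ne_top
    have hρ'le : ENNReal.ofReal ρ' ≤ ρ := by
      rw [hρ', ENNReal.ofReal_toReal hmin_ne_top]
      exact min_le_right _ _
    set τ : ℝ := ρ' / 2 with hτ
    set θ : ℝ := ρ' / 2 with hθ
    have hτ0 : 0 < τ := by positivity
    have hθ0 : 0 < θ := by positivity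
    -- Step 3 : second averaging scale δ₂
    set e₂ : ℝ := min 1 (θ * m / 8) with he₂
    have he₂0 : 0 < e₂ := lt_min zero_lt_one (by positivity)
    obtain ⟨δ₂, hδ₂0, hδ₂⟩ := h1 (ENNReal.ofReal e₂) (by simpa using he₂0)
    set E₂ : Set X := closedBall x0 (R + 2 * δ) with hE₂
    have hRδ : 0 < R + 2 * δ := by linarith
    obtain ⟨m₂, hm₂0, hm₂⟩ := aux_ball_lower hball hdoub x0 hRδ hδ₂0
    set V2 : ℝ≥0∞ := μ (closedBall x0 (R + 2 * δ + δ₂)) with hV2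
    set M₂ : ℝ := ((C : ℝ≥0∞) * V2 ^ (1 - 1 / pt)).toReal / m₂ + 1 with hM₂def
    have hM₂0 : 0 < M₂ := by positivity
    have hm₂E : ∀ z ∈ E₂, m₂ ≤ (μ (closedBall z δ₂)).toReal := by
      intro z hz
      have := hm₂ z hz
      have hfin := (hball z δ₂ hδ₂0).2.ne
      calc m₂ = (ENNReal.ofReal m₂).toReal := by rw [ENNReal.toReal_ofReal hm₂0.le]
        _ ≤ (μ (closedBall z δ₂)).toReal := ENNReal.toReal_mono hfin this
    have hexp : 0 ≤ 1 - 1 / pt := aux_exp_nonneg hp1 hp2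
    have hM₂ : ∀ f ∈ F, ∀ z ∈ E₂, |avgOp μ δ₂ f z| ≤ M₂ := by
      intro f hfF z hz
      have hsub : closedBall z δ₂ ⊆ closedBall x0 (R + 2 * δ + δ₂) := by
        have := aux_subset2 (x := x0) (y := z) (δ := δ₂) (r := R + 2 * δ)
          (mem_closedBall.1 hz)
        rwa [add_comm] at this
      have hlin : ∫⁻ w in closedBall z δ₂, ‖f w‖₊ ∂μ ≤ (C : ℝ≥0∞) * V2 ^ (1 - 1 / pt) := by
        refine (aux_holder (hF f hfF).1.aestronglyMeasurable hp1 measurableSet_closedBall).trans ?_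
        refine mul_le_mul' ((eLpNorm_indicator_le f).trans (hF f hfF).2) ?_
        exact ENNReal.rpow_le_rpow (measure_mono hsub) hexp
      have hfin : (C : ℝ≥0∞) * V2 ^ (1 - 1 / pt) ≠ ⊤ :=
        ENNReal.mul_ne_top coe_ne_top
          (ENNReal.rpow_lt_top_of_nonneg hexp (hball x0 (R + 2 * δ + δ₂) (by linarith)).2.ne).ne
      have hle := aux_setint_le (hF f hfF).1.aestronglyMeasurable hlin hfin
      have hNb : |∫ w in closedBall z δ₂, f w ∂μ| ≤ ((C : ℝ≥0∞) * V2 ^ (1 - 1 / pt)).toReal := by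
        calc |∫ w in closedBall z δ₂, f w ∂μ| ≤ ∫ w in closedBall z δ₂, ‖f w‖ ∂μ := by
              rw [← Real.norm_eq_abs]; exact norm_integral_le_integral_norm f
          _ ≤ _ := hle
      have hD0 : 0 < (μ (closedBall z δ₂)).toReal := lt_of_lt_of_le hm₂0 (hm₂E z hz)
      rw [avgOp, abs_mul, abs_inv, abs_of_pos hD0]
      calc (μ (closedBall z δ₂)).toReal⁻¹ * |∫ w in closedBall z δ₂, f w ∂μ| ≤
          m₂⁻¹ * ((C : ℝ≥0∞) * V2 ^ (1 - 1 / pt)).toReal := by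
            refine mul_le_mul ?_ hNb (abs_nonneg _) (by positivity)
            rw [inv_le_inv₀ hD0 hm₂0]
            exact hm₂E z hz
        _ = ((C : ℝ≥0∞) * V2 ^ (1 - 1 / pt)).toReal / m₂ := by rw [inv_mul_eq_div]
        _ ≤ M₂ := by rw [hM₂def]; linarith
    -- continuity of averaging operators
    have hcontδ : ∀ f ∈ F, Continuous (avgOp μ δ f) :=
      fun f hf => aux_avg_continuous hball hstar hp1 hp2 (hF f hf).1 hδ0
    have hcontδ₂ : ∀ f ∈ F, Continuous (avgOp μ δ₂ f) :=
      fun f hf => aux_avg_continuous hball hstar hp1 hp2 (hF f hf).1 hδ₂0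
    -- Step 4 : choice of annulus measure bound hr
    set b : ℝ := min 1 (θ * m / (8 * (M₂ + 1))) with hb
    have hb0 : 0 < b := lt_min zero_lt_one (by positivity)
    set hreal : ℝ := min (min 1 (θ * m * m / (4 * (K0 + 1)))) (b ^ pt) with hhreal
    have hhreal0 : 0 < hreal := by
      refine lt_min (lt_min zero_lt_one (by positivity)) ?_
      exact Real.rpow_pos_of_pos hb0 _
    have hhreal1 : hreal ≤ 1 := (min_le_left _ _).trans (min_le_left _ _)
    obtain ⟨r, hr0, hrδ, hann⟩ := hstar δ hδ0 (ENNReal.ofReal hreal) (by simpa using hhreal0)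
    -- uniform smallness of integrals over small subsets of E₂
    set jb : ℝ := e₂ + M₂ * hreal ^ (1 / pt) with hjb
    have hsmall : ∀ f ∈ F, ∀ S : Set X, MeasurableSet S → S ⊆ E₂ →
        μ S ≤ ENNReal.ofReal hreal → ∫ z in S, ‖f z‖ ∂μ ≤ jb := by
      intro f hfF S hSm hSE₂ hSμ
      have hfa := (hF f hfF).1.aestronglyMeasurable
      have hA₂a : AEStronglyMeasurable (avgOp μ δ₂ f) μ := (hcontδ₂ f hfF).aestronglyMeasurable
      have hS1 : μ S ≤ 1 := hSμ.trans (ENNReal.ofReal_le_one.2 hhreal1)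
      set b' : ℝ≥0∞ := ENNReal.ofReal e₂ + ENNReal.ofReal M₂ * (ENNReal.ofReal hreal) ^ (1 / pt)
        with hb'
      have hb't : b' ≠ ⊤ := by
        refine ENNReal.add_ne_top.2 ⟨ofReal_ne_top, ENNReal.mul_ne_top ofReal_ne_top ?_⟩
        exact (ENNReal.rpow_lt_top_of_nonneg (by positivity) ofReal_ne_top).ne
      have hsplitf : S.indicator f = fun x =>
          S.indicator (fun z => f z - avgOp μ δ₂ f z) x + S.indicator (avgOp μ δ₂ f) x := by
        funext x
        by_cases hx : x ∈ S
        · simp [Set.indicator_of_mem hx]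
        · simp [Set.indicator_of_notMem hx]
      have hbound1 : eLpNorm (S.indicator (fun z => f z - avgOp μ δ₂ f z)) p μ ≤
          ENNReal.ofReal e₂ := by
        refine le_trans (eLpNorm_mono fun x => ?_) (hδ₂ f hfF).le
        by_cases hx : x ∈ S
        · rw [Set.indicator_of_mem hx]
          simp only [Real.norm_eq_abs]
          rw [abs_sub_comm]
        · rw [Set.indicator_of_notMem hx, norm_zero]
          exact norm_nonneg _
      have hbound2 : eLpNorm (S.indicator (avgOp μ δ₂ f)) p μ ≤
          ENNReal.ofReal M₂ * (ENNReal.ofReal hreal) ^ (1 / pt) := by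
        have hmono : eLpNorm (S.indicator (avgOp μ δ₂ f)) p μ ≤
            eLpNorm (S.indicator (fun _ => M₂) : X → ℝ) p μ := by
          refine eLpNorm_mono fun x => ?_
          by_cases hx : x ∈ S
          · rw [Set.indicator_of_mem hx, Set.indicator_of_mem hx]
            simp only [Real.norm_eq_abs]
            rw [abs_of_pos hM₂0]
            exact hM₂ f hfF x (hSE₂ hx)
          · rw [Set.indicator_of_notMem hx, Set.indicator_of_notMem hx]
        refine hmono.trans ?_
        rw [eLpNorm_indicator_const hSm hp0 hp2]
        rw [← Real.enorm_eq_ofReal hM₂0.le]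
        exact mul_le_mul_right (ENNReal.rpow_le_rpow hSμ (by positivity)) _
      have hchain : ∫⁻ z in S, ‖f z‖₊ ∂μ ≤ b' := by
        refine (aux_holder hfa hp1 hSm).trans ?_
        calc eLpNorm (S.indicator f) p μ * μ S ^ (1 - 1 / pt) ≤
            eLpNorm (S.indicator f) p μ * 1 := by
              gcongr
              exact ENNReal.rpow_le_one hS1 (aux_exp_nonneg hp1 hp2)
          _ = eLpNorm (S.indicator f) p μ := mul_one _
          _ ≤ b' := by
              rw [hsplitf]
              refine le_trans (eLpNorm_add_le ((hfa.sub hA₂a).indicator hSm)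
                (hA₂a.indicator hSm) hp1) ?_
              exact add_le_add hbound1 hbound2
      have := aux_setint_le hfa hchain hb't
      refine this.trans (le_of_eq ?_)
      rw [hb', ENNReal.toReal_add ofReal_ne_top
        (ENNReal.mul_ne_top ofReal_ne_top
          (ENNReal.rpow_lt_top_of_nonneg (by positivity) ofReal_ne_top).ne),
        ENNReal.toReal_mul, ENNReal.toReal_ofReal he₂0.le, ENNReal.toReal_ofReal hM₂0.le,
        ENNReal.ofReal_rpow_of_pos hhreal0, ENNReal.toReal_ofReal (by positivity)]
    -- key oscillation bound
    have hosc : ∀ f ∈ F, ∀ x ∈ E, ∀ t' ∈ E, dist t' x ≤ r →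
        |avgOp μ δ f x - avgOp μ δ f t'| ≤ θ := by
      intro f hfF x hx t' ht' hdist
      have hint : IntegrableOn f (closedBall x (δ + r)) μ :=
        hintable f hfF x (δ + r) (by linarith)
      set A : Set X := closedBall x (δ + r) \ closedBall x (δ - r) with hAdef
      have hAm : MeasurableSet A := measurableSet_closedBall.diff measurableSet_closedBall
      have hAE₂ : A ⊆ E₂ := by
        intro z hz
        have hz1 : z ∈ closedBall x (δ + r) := hz.1
        rw [mem_closedBall] at *
        calc dist z x0 ≤ dist z x + dist x x0 := dist_triangle _ _ _
          _ ≤ (δ + r) + R := add_le_add hz1 (mem_closedBall.1 hx)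
          _ ≤ R + 2 * δ := by linarith
      have hAμ : μ A ≤ ENNReal.ofReal hreal := (hann x).le
      set Jv : ℝ := ∫ z in A, ‖f z‖ ∂μ with hJv
      have hJv0 : 0 ≤ Jv := setIntegral_nonneg hAm fun z _ => norm_nonneg _
      have hJvjb : Jv ≤ jb := hsmall f hfF A hAm hAE₂ hAμ
      have hNb := aux_N_close hr0 hrδ hdist hint
      have hDb := aux_D_close hball hr0 hrδ hdist
      have halg := aux_alg (Dx := (μ (closedBall x δ)).toReal)
        (Dy := (μ (closedBall t' δ)).toReal)
        (Nx := ∫ z in closedBall x δ, f z ∂μ) (Ny := ∫ z in closedBall t' δ, f z ∂μ)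
        (mlow := m) (K := K0) (Jv := Jv) (a := (μ A).toReal)
        hm0 (hmE x hx) (hmE t' ht') (hK0 f hfF t' ht')
        (by rw [abs_sub_comm]; exact hNb) (by rw [abs_sub_comm]; exact hDb)
        ENNReal.toReal_nonneg
      have hstep : |avgOp μ δ f x - avgOp μ δ f t'| ≤
          (2 * Jv) / m + ((μ A).toReal * K0) / (m * m) := by
        simpa [avgOp] using halg
      refine hstep.trans ?_
      -- numeric estimates
      have hμA : (μ A).toReal ≤ hreal :=
        ENNReal.toReal_le_of_le_ofReal hhreal0.le hAμ
      have hrow : hreal ^ (1 / pt) ≤ b := by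
        have h1 : hreal ≤ b ^ pt := min_le_right _ _
        calc hreal ^ (1 / pt) ≤ (b ^ pt) ^ (1 / pt) :=
              Real.rpow_le_rpow hhreal0.le h1 (by positivity)
          _ = b := by
              rw [← Real.rpow_mul hb0.le, mul_one_div_cancel hpt0.ne', Real.rpow_one]
      have he₂b : e₂ ≤ θ * m / 8 := min_le_right _ _
      have hbb : b ≤ θ * m / (8 * (M₂ + 1)) := min_le_right _ _
      have hM2b : M₂ * hreal ^ (1 / pt) ≤ θ * m / 8 := by
        have h2 : M₂ * hreal ^ (1 / pt) ≤ M₂ * (θ * m / (8 * (M₂ + 1))) :=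
          mul_le_mul_of_nonneg_left (hrow.trans hbb) hM₂0.le
        refine h2.trans ?_
        have e : M₂ * (θ * m / (8 * (M₂ + 1))) = (θ * m / 8) * (M₂ / (M₂ + 1)) := by
          field_simp
        rw [e]
        calc (θ * m / 8) * (M₂ / (M₂ + 1)) ≤ (θ * m / 8) * 1 := by
              refine mul_le_mul_of_nonneg_left ?_ (by positivity)
              rw [div_le_one (by positivity)]
              linarith
          _ = θ * m / 8 := mul_one _
      have hjb4 : jb ≤ θ * m / 4 := by
        rw [hjb]; linarith
      have hh2 : hreal ≤ θ * m * m / (4 * (K0 + 1)) :=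
        (min_le_left _ _).trans (min_le_right _ _)
      have t1 : (2 * Jv) / m ≤ θ / 2 := by
        rw [div_le_iff₀ hm0]
        have := hJvjb.trans hjb4
        linarith
      have t2 : ((μ A).toReal * K0) / (m * m) ≤ θ / 4 := by
        rw [div_le_iff₀ (by positivity)]
        have hA4 : (μ A).toReal ≤ θ * m * m / (4 * (K0 + 1)) := hμA.trans hh2
        have hK1 : (0:ℝ) < K0 + 1 := by positivity
        have step : (μ A).toReal * K0 ≤ (θ * m * m / (4 * (K0 + 1))) * (K0 + 1) :=
          mul_le_mul hA4 (by linarith) hK0pos.le (by positivity)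
        have e2 : (θ * m * m / (4 * (K0 + 1))) * (K0 + 1) = θ * m * m / 4 := by
          rw [← div_div, div_mul_cancel₀ _ hK1.ne']
        have e3 : θ * m * m / 4 = θ / 4 * (m * m) := by ring
        linarith
      linarith
    -- bound on values of avgOp at centers
    set M₁ : ℝ := K0 / m with hM₁
    have hM₁b : ∀ f ∈ F, ∀ t' ∈ E, |avgOp μ δ f t'| ≤ M₁ := by
      intro f hfF t' ht'
      have hD0 : 0 < (μ (closedBall t' δ)).toReal := lt_of_lt_of_le hm0 (hmE t' ht')
      rw [avgOp, abs_mul, abs_inv, abs_of_pos hD0]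
      calc (μ (closedBall t' δ)).toReal⁻¹ * |∫ z in closedBall t' δ, f z ∂μ| ≤
          m⁻¹ * K0 := by
            refine mul_le_mul ?_ (hK0 f hfF t' ht') (abs_nonneg _) (by positivity)
            rw [inv_le_inv₀ hD0 hm0]
            exact hmE t' ht'
        _ = M₁ := by rw [hM₁, inv_mul_eq_div]
    -- Step 5 : the net and partition
    obtain ⟨n, t, htE, hcover⟩ := aux_net hball hdoub x0 hR0' hr0
    set P : Fin n → Set X := fun i =>
      (E ∩ closedBall (t i) r) \ ⋃ j, ⋃ (_ : j < i), closedBall (t j) r with hP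
    set D : Finset ℝ := (Finset.Icc ⌊-(M₁ / τ)⌋ ⌈M₁ / τ⌉).image (fun k : ℤ => (k : ℝ) * τ)
      with hD
    set Φ : (Fin n → ℝ) → X → ℝ := fun c x => ∑ i, (P i).indicator (fun _ => c i) x with hΦ
    refine ⟨(Fintype.piFinset fun _ : Fin n => D).image Φ, fun f hfF => ?_⟩
    set c : Fin n → ℝ := fun i => (⌊avgOp μ δ f (t i) / τ⌋ : ℝ) * τ with hc
    have hcD : ∀ i, c i ∈ D := by
      intro i
      have hv := hM₁b f hfF (t i) (htE i)
      rw [abs_le] at hv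
      set v := avgOp μ δ f (t i) with hv'
      have h1 : -(M₁ / τ) ≤ v / τ := by
        rw [← neg_div]
        gcongr
        exact hv.1
      have h2 : v / τ ≤ M₁ / τ := by gcongr; exact hv.2
      refine Finset.mem_image.2 ⟨⌊v / τ⌋, Finset.mem_Icc.2 ⟨Int.floor_mono h1, ?_⟩, rfl⟩
      have h3 : (⌊v / τ⌋ : ℝ) ≤ (⌈M₁ / τ⌉ : ℝ) := (Int.floor_le _).trans (h2.trans (Int.le_ceil _))
      exact_mod_cast h3
    have hcnear : ∀ i, |avgOp μ δ f (t i) - c i| ≤ τ := by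
      intro i
      set v := avgOp μ δ f (t i) with hv'
      have hfl : (⌊v / τ⌋ : ℝ) * τ ≤ v := by
        rw [← le_div_iff₀ hτ0]
        exact Int.floor_le _
      have hfl2 : v < (⌊v / τ⌋ : ℝ) * τ + τ := by
        have h := Int.lt_floor_add_one (v / τ)
        rw [div_lt_iff₀ hτ0] at h
        push_cast at h
        linarith
      show |v - (⌊v / τ⌋ : ℝ) * τ| ≤ τ
      rw [abs_le]
      constructor <;> linarith
    refine ⟨Φ c, Finset.mem_image.2 ⟨c, Fintype.mem_piFinset.2 hcD, rfl⟩, ?_⟩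
    -- pointwise bound
    have hpoint : ∀ x, |f x - Φ c x| ≤ ‖Eᶜ.indicator f x‖ +
        (‖avgOp μ δ f x - f x‖ + E.indicator (fun _ => θ + τ) x) := by
      intro x
      by_cases hxE : x ∈ E
      · have hsne : (Finset.univ.filter fun i => x ∈ closedBall (t i) r).Nonempty := by
          obtain ⟨i, hi⟩ := mem_iUnion.1 (hcover hxE)
          exact ⟨i, Finset.mem_filter.2 ⟨Finset.mem_univ _, hi⟩⟩
        set sidx := Finset.univ.filter fun i => x ∈ closedBall (t i) r with hsidx
        set i₀ := sidx.min' hsne with hi₀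
        have hxi₀ : x ∈ closedBall (t i₀) r :=
          (Finset.mem_filter.1 (sidx.min'_mem hsne)).2
        have hxP : x ∈ P i₀ := by
          refine ⟨⟨hxE, hxi₀⟩, fun hmem => ?_⟩
          obtain ⟨j, hj⟩ := mem_iUnion.1 hmem
          obtain ⟨hjlt, hxj⟩ := mem_iUnion.1 hj
          have hjs : j ∈ sidx := Finset.mem_filter.2 ⟨Finset.mem_univ _, hxj⟩
          exact absurd (sidx.min'_le j hjs) (not_le.2 hjlt)
        have hnot : ∀ j, j ≠ i₀ → x ∉ P j := by
          intro j hj hxPj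
          have hjs : j ∈ sidx := Finset.mem_filter.2 ⟨Finset.mem_univ _, hxPj.1.2⟩
          have hij : i₀ < j := lt_of_le_of_ne (sidx.min'_le j hjs) (Ne.symm hj)
          exact hxPj.2 (mem_iUnion.2 ⟨i₀, mem_iUnion.2 ⟨hij, hxi₀⟩⟩)
        have hΦx : Φ c x = c i₀ := by
          rw [hΦ]
          simp only []
          rw [Finset.sum_eq_single i₀ (fun j _ hj => Set.indicator_of_notMem (hnot j hj) _)
            (fun h => absurd (Finset.mem_univ _) h)]
          exact Set.indicator_of_mem hxP _
        have hoscx : |avgOp μ δ f x - avgOp μ δ f (t i₀)| ≤ θ := by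
          refine hosc f hfF x hxE (t i₀) (htE i₀) ?_
          rw [dist_comm]
          exact mem_closedBall.1 hxi₀
        have hnear := hcnear i₀
        have htri1 : |f x - c i₀| ≤ |f x - avgOp μ δ f x| + |avgOp μ δ f x - c i₀| :=
          abs_sub_le _ _ _
        have htri2 : |avgOp μ δ f x - c i₀| ≤ |avgOp μ δ f x - avgOp μ δ f (t i₀)| +
            |avgOp μ δ f (t i₀) - c i₀| := abs_sub_le _ _ _
        have hcomm : |f x - avgOp μ δ f x| = |avgOp μ δ f x - f x| := abs_sub_comm _ _
        rw [hΦx, Set.indicator_of_notMem (Set.notMem_compl_iff.2 hxE), norm_zero,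
          Set.indicator_of_mem hxE, Real.norm_eq_abs]
        linarith
      · have hΦx : Φ c x = 0 := by
          rw [hΦ]
          exact Finset.sum_eq_zero fun i _ =>
            Set.indicator_of_notMem (fun hxPi => hxE hxPi.1.1) _
        have hxEc : x ∈ Eᶜ := hxE
        rw [hΦx, Set.indicator_of_mem hxEc, Set.indicator_of_notMem hxE, sub_zero,
          Real.norm_eq_abs, Real.norm_eq_abs]
        have h0 := abs_nonneg (avgOp μ δ f x - f x)
        linarith
    -- assemble
    have hAESM1 : AEStronglyMeasurable (fun x => ‖Eᶜ.indicator f x‖) μ :=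
      ((hF f hfF).1.aestronglyMeasurable.indicator hEmeas.compl).norm
    have hAESM2 : AEStronglyMeasurable (fun x => ‖avgOp μ δ f x - f x‖) μ :=
      (((hcontδ f hfF).aestronglyMeasurable).sub (hF f hfF).1.aestronglyMeasurable).norm
    have hAESM3 : AEStronglyMeasurable (E.indicator (fun _ => θ + τ) : X → ℝ) μ :=
      (aestronglyMeasurable_const.indicator hEmeas)
    calc eLpNorm (fun x => f x - Φ c x) p μ ≤
        eLpNorm (fun x => ‖Eᶜ.indicator f x‖ +
          (‖avgOp μ δ f x - f x‖ + E.indicator (fun _ => θ + τ) x)) p μ := by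
          refine eLpNorm_mono_real fun x => ?_
          rw [Real.norm_eq_abs]
          exact hpoint x
      _ ≤ eLpNorm (fun x => ‖Eᶜ.indicator f x‖) p μ +
          eLpNorm (fun x => ‖avgOp μ δ f x - f x‖ + E.indicator (fun _ => θ + τ) x) p μ :=
          eLpNorm_add_le hAESM1 (hAESM2.add hAESM3) hp1
      _ ≤ eLpNorm (fun x => ‖Eᶜ.indicator f x‖) p μ +
          (eLpNorm (fun x => ‖avgOp μ δ f x - f x‖) p μ +
           eLpNorm (E.indicator (fun _ => θ + τ) : X → ℝ) p μ) := by
          gcongr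
          exact eLpNorm_add_le hAESM2 hAESM3 hp1
      _ ≤ ε4 + (ε4 + ε2) := by
          have b1 : eLpNorm (fun x => ‖Eᶜ.indicator f x‖) p μ ≤ ε4 := by
            rw [eLpNorm_norm]
            exact (htail f hfF).le
          have b2 : eLpNorm (fun x => ‖avgOp μ δ f x - f x‖) p μ ≤ ε4 := by
            rw [eLpNorm_norm]
            exact (hδ f hfF).le
          have b3 : eLpNorm (E.indicator (fun _ => θ + τ) : X → ℝ) p μ ≤ ε2 := by
            rw [eLpNorm_indicator_const hEmeas hp0 hp2]
            have hθτ : θ + τ = ρ' := by rw [hθ, hτ]; ring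
            have hnn : (‖θ + τ‖ₑ : ℝ≥0∞) = ENNReal.ofReal ρ' := by
              rw [hθτ, ← Real.enorm_eq_ofReal hρ'0.le]
            rw [hnn]
            calc ENNReal.ofReal ρ' * μ E ^ (1 / pt) ≤ ρ * W := by
                  rw [hW]; exact mul_le_mul_left hρ'le _
              _ = ε2 := by rw [hρ]; exact ENNReal.div_mul_cancel hW0 hWt
          exact add_le_add b1 (add_le_add b2 b3)
      _ = ε := by
          rw [← ENNReal.add_halves ε2, hε4, ← add_assoc, ENNReal.add_halves, hε2,
            ENNReal.add_halves]
end
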